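/- arXiv:2011.10674 — 8 statements merged into one kernel-verified Lean document; each statement's English description precedes it below -/
import Mathlib

section
/- (Robust System Level Synthesis over a finite horizon.) Let A ∈ ℝ^{n×n}, B ∈ ℝ^{n×m}, L ≥ 1. Suppose Φx ∈ ℝ^{nL×nL} and Φu ∈ ℝ^{mL×nL} are block-lower-triangular, Δ ∈ ℝ^{nL×nL} is strictly block-lower-triangular, and (I − Z𝒜)Φx − ZℬΦu = I + Δ. Then Φx and I + Δ are invertible, and for any vectors x̄ ∈ ℝ^{nL}, ū ∈ ℝ^{mL}, w̄ ∈ ℝ^{nL} satisfying the closed-loop equations x̄ = Z𝒜x̄ + Zℬū + w̄ and ū = Φu Φx^{−1} x̄, it holds that x̄ = Φx (I + Δ)^{−1} w̄ and ū = Φu (I + Δ)^{−1} w̄. -/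
open Matrix

noncomputable section

/-- Block down-shift matrix with `L` blocks of size `n`: identity blocks on the
first block sub-diagonal, zeros elsewhere. -/
def blkShift (n L : ℕ) : Matrix (Fin L × Fin n) (Fin L × Fin n) ℝ :=
  Matrix.of fun p q => if (p.1 : ℕ) = (q.1 : ℕ) + 1 ∧ p.2 = q.2 then 1 else 0

/-- Kronecker product `I_L ⊗ A`, indexed by (block, inner) pairs. -/
def kronId (L : ℕ) {α β : Type} (A : Matrix α β ℝ) :
    Matrix (Fin L × α) (Fin L × β) ℝ :=
  Matrix.of fun p q => if p.1 = q.1 then A p.2 q.2 else 0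

/-- Block-lower-triangular: the (i,j) block vanishes for j > i. -/
def BlockLT {α β : Type} {L : ℕ} (M : Matrix (Fin L × α) (Fin L × β) ℝ) : Prop :=
  ∀ p q, (p.1 : ℕ) < (q.1 : ℕ) → M p q = 0

/-- Strictly block-lower-triangular: the (i,j) block vanishes for j ≥ i. -/
def StrictBlockLT {α β : Type} {L : ℕ} (M : Matrix (Fin L × α) (Fin L × β) ℝ) : Prop :=
  ∀ p q, (p.1 : ℕ) ≤ (q.1 : ℕ) → M p q = 0

/-- Block-Hankel matrix of order `L` of the signal `σ`. -/
def hankelMat (L : ℕ) {T p : ℕ} (σ : Fin T → Fin p → ℝ) :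
    Matrix (Fin L × Fin p) (Fin (T - L + 1)) ℝ :=
  Matrix.of fun q j => if h : (q.1 : ℕ) + (j : ℕ) < T then σ ⟨(q.1 : ℕ) + (j : ℕ), h⟩ q.2 else 0

/-- First block row `𝓗₁(σ) = [σ(0) ⋯ σ(T−L)]` of the block-Hankel matrix of order `L`. -/
def hankelRow (L : ℕ) {T p : ℕ} (σ : Fin T → Fin p → ℝ) :
    Matrix (Fin p) (Fin (T - L + 1)) ℝ :=
  Matrix.of fun a j => if h : (j : ℕ) < T then σ ⟨j, h⟩ a else 0

/-- `E₁ ∈ ℝ^{nL×n}`: first block is `I_n`, remaining blocks zero. -/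
def E1 (n L : ℕ) : Matrix (Fin L × Fin n) (Fin n) ℝ :=
  Matrix.of fun p b => if (p.1 : ℕ) = 0 ∧ p.2 = b then 1 else 0

/-- `𝒵_L = [I  Z  Z² ⋯ Z^{L−1}]`. -/
def zcat (n L : ℕ) : Matrix (Fin L × Fin n) (Fin L × (Fin L × Fin n)) ℝ :=
  Matrix.of fun p kq => (blkShift n L ^ (kq.1 : ℕ)) p kq.2

/-- Spectral norm (ℓ₂ → ℓ₂ operator norm) of a real matrix. -/
def specNorm {α β : Type} [Fintype α] [Fintype β] [DecidableEq β] (M : Matrix α β ℝ) : ℝ :=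
  ‖(Matrix.toEuclideanLin M).toContinuousLinearMap‖

/-- Frobenius norm of a real matrix. -/
def frobNorm {α β : Type} [Fintype α] [Fintype β] (M : Matrix α β ℝ) : ℝ :=
  Real.sqrt (∑ i, ∑ j, (M i j) ^ 2)


lemma strictBLT_pow {α : Type} [DecidableEq α] [Fintype α] {L : ℕ}
    {M : Matrix (Fin L × α) (Fin L × α) ℝ} (hM : StrictBlockLT M) :
    ∀ k (p q : Fin L × α), (p.1 : ℕ) < (q.1 : ℕ) + k → (M ^ k) p q = 0 := by
  intro k
  induction k with
  | zero =>
    intro p q h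
    simp only [pow_zero]
    exact Matrix.one_apply_ne (by rintro rfl; omega)
  | succ k ih =>
    intro p q h
    rw [pow_succ', Matrix.mul_apply]
    refine Finset.sum_eq_zero fun r _ => ?_
    by_cases hpr : (p.1 : ℕ) ≤ (r.1 : ℕ)
    · rw [hM p r hpr, zero_mul]
    · rw [ih r q (by omega), mul_zero]

lemma strictBLT_nilpotent {α : Type} [DecidableEq α] [Fintype α] {L : ℕ}
    {M : Matrix (Fin L × α) (Fin L × α) ℝ} (hM : StrictBlockLT M) :
    IsNilpotent M := by
  refine ⟨L, ?_⟩
  ext p q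
  rw [strictBLT_pow hM L p q (by have := p.1.isLt; omega)]
  rfl

lemma strictBLT_mul_blt {α β γ : Type} [Fintype β] {L : ℕ}
    {M : Matrix (Fin L × α) (Fin L × β) ℝ} {N : Matrix (Fin L × β) (Fin L × γ) ℝ}
    (hM : StrictBlockLT M) (hN : BlockLT N) : StrictBlockLT (M * N) := by
  intro p q h
  rw [Matrix.mul_apply]
  refine Finset.sum_eq_zero fun r _ => ?_
  by_cases hpr : (p.1 : ℕ) ≤ (r.1 : ℕ)
  · rw [hM p r hpr, zero_mul]
  · rw [hN r q (by omega), mul_zero]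

lemma strictBLT_shift_kron {n L : ℕ} {β : Type} (A : Matrix (Fin n) β ℝ) :
    StrictBlockLT (blkShift n L * kronId L A) := by
  intro p q h
  rw [Matrix.mul_apply]
  refine Finset.sum_eq_zero fun r _ => ?_
  simp only [blkShift, kronId, Matrix.of_apply]
  rcases eq_or_ne r.1 q.1 with h2 | h2
  · have hv : (r.1 : ℕ) = (q.1 : ℕ) := by rw [h2]
    have h1 : ¬((p.1 : ℕ) = (r.1 : ℕ) + 1 ∧ p.2 = r.2) := by
      rintro ⟨ha, -⟩; omega
    simp [h1]
  · simp [h2]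

/-- Robust System Level Synthesis over a finite horizon. -/
theorem stmt1 {n m L : ℕ} (hL : 1 ≤ L)
    (A : Matrix (Fin n) (Fin n) ℝ) (B : Matrix (Fin n) (Fin m) ℝ)
    (Phix : Matrix (Fin L × Fin n) (Fin L × Fin n) ℝ)
    (Phiu : Matrix (Fin L × Fin m) (Fin L × Fin n) ℝ)
    (Delta : Matrix (Fin L × Fin n) (Fin L × Fin n) ℝ)
    (hPhix : BlockLT Phix) (hPhiu : BlockLT Phiu) (hDelta : StrictBlockLT Delta)
    (heq : (1 - blkShift n L * kronId L A) * Phix - (blkShift n L * kronId L B) * Phiu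
            = 1 + Delta) :
    IsUnit Phix ∧ IsUnit (1 + Delta) ∧
    ∀ (xbar : Fin L × Fin n → ℝ) (ubar : Fin L × Fin m → ℝ) (wbar : Fin L × Fin n → ℝ),
      xbar = (blkShift n L * kronId L A) *ᵥ xbar + (blkShift n L * kronId L B) *ᵥ ubar + wbar →
      ubar = (Phiu * Phix⁻¹) *ᵥ xbar →
      xbar = (Phix * (1 + Delta)⁻¹) *ᵥ wbar ∧ ubar = (Phiu * (1 + Delta)⁻¹) *ᵥ wbar := by
  classical
  set S := blkShift n L * kronId L A with hSdef
  set T := blkShift n L * kronId L B with hTdef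
  have hSstrict : StrictBlockLT S := strictBLT_shift_kron A
  have hTstrict : StrictBlockLT T := strictBLT_shift_kron B
  have hN : StrictBlockLT (Delta + T * Phiu) := by
    intro p q h
    have := strictBLT_mul_blt hTstrict hPhiu p q h
    simp [Matrix.add_apply, hDelta p q h, this]
  have hunitN : IsUnit (1 + (Delta + T * Phiu)) := (strictBLT_nilpotent hN).isUnit_one_add
  have hSmul : (1 - S) * Phix = 1 + (Delta + T * Phiu) := by
    rw [← add_assoc, ← heq]; abel
  have hD : IsUnit (1 + Delta) := (strictBLT_nilpotent hDelta).isUnit_one_add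
  have hPx : IsUnit Phix := by
    have hdet : IsUnit ((1 - S).det * Phix.det) := by
      rw [← Matrix.det_mul, hSmul]
      exact (Matrix.isUnit_iff_isUnit_det _).mp hunitN
    exact (Matrix.isUnit_iff_isUnit_det _).mpr (isUnit_of_mul_isUnit_right hdet)
  have hPxd : IsUnit Phix.det := (Matrix.isUnit_iff_isUnit_det _).mp hPx
  have hDd : IsUnit (1 + Delta).det := (Matrix.isUnit_iff_isUnit_det _).mp hD
  refine ⟨hPx, hD, ?_⟩
  intro xbar ubar wbar hxe hue
  have hkey : (1 + Delta) * Phix⁻¹ = (1 - S) - T * (Phiu * Phix⁻¹) := by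
    rw [← heq, Matrix.sub_mul, mul_assoc, Matrix.mul_nonsing_inv _ hPxd, mul_one, Matrix.mul_assoc]
  have hw' : wbar = xbar - (S *ᵥ xbar + T *ᵥ ubar) := by
    rw [eq_sub_iff_add_eq, add_comm]; exact hxe.symm
  have hTm : (T * (Phiu * Phix⁻¹)) *ᵥ xbar = T *ᵥ ubar := by
    rw [hue, Matrix.mulVec_mulVec]
  have hw : wbar = ((1 + Delta) * Phix⁻¹) *ᵥ xbar := by
    rw [hkey, Matrix.sub_mulVec, Matrix.sub_mulVec, Matrix.one_mulVec, hTm, sub_sub]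
    exact hw'
  have hcancel : Phix * (1 + Delta)⁻¹ * ((1 + Delta) * Phix⁻¹) = 1 := by
    rw [mul_assoc, ← mul_assoc (1 + Delta)⁻¹, Matrix.nonsing_inv_mul _ hDd, one_mul,
      Matrix.mul_nonsing_inv _ hPxd]
  have hx : xbar = (Phix * (1 + Delta)⁻¹) *ᵥ wbar := by
    rw [hw, Matrix.mulVec_mulVec, hcancel, Matrix.one_mulVec]
  refine ⟨hx, ?_⟩
  have hmat : Phiu * Phix⁻¹ * (Phix * (1 + Delta)⁻¹) = Phiu * (1 + Delta)⁻¹ := by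
    rw [Matrix.mul_assoc, ← Matrix.mul_assoc Phix⁻¹, Matrix.nonsing_inv_mul _ hPxd, one_mul]
  rw [hue, hx, Matrix.mulVec_mulVec, hmat]

end
end

section
/- (Noiseless data-driven achievability, forward direction.) Let A ∈ ℝ^{n×n}, B ∈ ℝ^{n×m}, 1 ≤ L ≤ T, and let x(0),…,x(T−1) ∈ ℝ^n, u(0),…,u(T−1) ∈ ℝ^m satisfy the noiseless dynamics x(t+1) = A x(t) + B u(t) for 0 ≤ t ≤ T−2. If G ∈ ℝ^{(T−L+1)×n} satisfies 𝓗_1(x) G = I_n, then (I − Z𝒜) 𝓗_L(x) G − Zℬ 𝓗_L(u) G = E₁. -/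
open Matrix

noncomputable section

lemma shiftKron {n L : ℕ} {α : Type} [Fintype α]
    (A : Matrix (Fin n) α ℝ) (p : Fin L × Fin n) (q : Fin L × α) :
    (blkShift n L * kronId L A) p q = if (p.1 : ℕ) = (q.1 : ℕ) + 1 then A p.2 q.2 else 0 := by
  obtain ⟨i, a⟩ := p
  obtain ⟨k, b⟩ := q
  simp [mul_apply, blkShift, kronId, Fintype.sum_prod_type, ite_and, mul_ite, ite_mul,
    Finset.sum_ite_eq, Finset.sum_ite_eq']

lemma key {n m L T : ℕ} (hL : 1 ≤ L) (hLT : L ≤ T)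
    (A : Matrix (Fin n) (Fin n) ℝ) (B : Matrix (Fin n) (Fin m) ℝ)
    (x : Fin T → Fin n → ℝ) (u : Fin T → Fin m → ℝ)
    (hdyn : ∀ (t : ℕ) (ht : t + 1 < T),
      x ⟨t + 1, ht⟩ = A *ᵥ x ⟨t, Nat.lt_of_succ_lt ht⟩ + B *ᵥ u ⟨t, Nat.lt_of_succ_lt ht⟩) :
    (1 - blkShift n L * kronId L A) * hankelMat L x
      - (blkShift n L * kronId L B) * hankelMat L u = E1 n L * hankelRow L x := by
  ext ⟨i, a⟩ j
  have hiL := i.isLt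
  have hjT := j.isLt
  have hij : (i : ℕ) + (j : ℕ) < T := by omega
  rw [Matrix.sub_mul, Matrix.one_mul, Matrix.sub_apply, Matrix.sub_apply]
  rcases Nat.eq_zero_or_pos (i : ℕ) with hi | hi
  · have hzA : ((blkShift n L * kronId L A) * hankelMat L x) (i, a) j = 0 := by
      rw [mul_apply]
      apply Finset.sum_eq_zero
      intro q _
      rw [shiftKron]
      simp only [hi]
      simp
    have hzB : ((blkShift n L * kronId L B) * hankelMat L u) (i, a) j = 0 := by
      rw [mul_apply]
      apply Finset.sum_eq_zero
      intro q _
      rw [shiftKron]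
      simp only [hi]
      simp
    rw [hzA, hzB]
    simp [hankelMat, E1, hankelRow, mul_apply, ite_and, hi, hij, Finset.sum_ite_eq,
      Finset.sum_ite_eq', show (j:ℕ) < T by omega]
  · set k : Fin L := ⟨(i : ℕ) - 1, by omega⟩ with hk
    have hcond : ∀ q : Fin L, ((i : ℕ) = (q : ℕ) + 1) = (q = k) := by
      intro q
      simp only [eq_iff_iff, Fin.ext_iff, hk]
      constructor <;> omega
    have hkj : ((k : ℕ) + (j : ℕ)) + 1 < T := by simp only [hk]; omega
    have hA : ((blkShift n L * kronId L A) * hankelMat L x) (i, a) j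
        = ∑ b, A a b * x ⟨(k : ℕ) + (j : ℕ), Nat.lt_of_succ_lt hkj⟩ b := by
      rw [mul_apply, Fintype.sum_prod_type]
      simp only [shiftKron, hcond, ite_mul, zero_mul]
      rw [Finset.sum_comm]
      simp only [Finset.sum_ite_eq', Finset.mem_univ, if_true, hankelMat, Matrix.of_apply]
      exact Finset.sum_congr rfl fun b _ => by rw [dif_pos (Nat.lt_of_succ_lt hkj)]
    have hB : ((blkShift n L * kronId L B) * hankelMat L u) (i, a) j
        = ∑ b, B a b * u ⟨(k : ℕ) + (j : ℕ), Nat.lt_of_succ_lt hkj⟩ b := by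
      rw [mul_apply, Fintype.sum_prod_type]
      simp only [shiftKron, hcond, ite_mul, zero_mul]
      rw [Finset.sum_comm]
      simp only [Finset.sum_ite_eq', Finset.mem_univ, if_true, hankelMat, Matrix.of_apply]
      exact Finset.sum_congr rfl fun b _ => by rw [dif_pos (Nat.lt_of_succ_lt hkj)]
    have hrhs : (E1 n L * hankelRow L x) (i, a) j = 0 := by
      rw [mul_apply]
      apply Finset.sum_eq_zero
      intro c _
      simp only [E1, Matrix.of_apply]
      rw [if_neg, zero_mul]
      rintro ⟨h, -⟩
      omega
    have hM : hankelMat L x (i, a) j = x ⟨(k : ℕ) + (j : ℕ) + 1, hkj⟩ a := by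
      simp only [hankelMat, Matrix.of_apply]
      rw [dif_pos hij]
      congr 1
      simp only [Fin.ext_iff, hk]
      omega
    rw [hA, hB, hrhs, hM, hdyn ((k : ℕ) + (j : ℕ)) hkj]
    simp [mulVec, dotProduct]

/-- Noiseless data-driven achievability, forward direction. -/
theorem stmt2 {n m L T : ℕ} (hL : 1 ≤ L) (hLT : L ≤ T)
    (A : Matrix (Fin n) (Fin n) ℝ) (B : Matrix (Fin n) (Fin m) ℝ)
    (x : Fin T → Fin n → ℝ) (u : Fin T → Fin m → ℝ)
    (hdyn : ∀ (t : ℕ) (ht : t + 1 < T),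
      x ⟨t + 1, ht⟩ = A *ᵥ x ⟨t, Nat.lt_of_succ_lt ht⟩ + B *ᵥ u ⟨t, Nat.lt_of_succ_lt ht⟩)
    (G : Matrix (Fin (T - L + 1)) (Fin n) ℝ)
    (hG : hankelRow L x * G = 1) :
    (1 - blkShift n L * kronId L A) * (hankelMat L x * G)
      - (blkShift n L * kronId L B) * (hankelMat L u * G) = E1 n L := by
  rw [show (1 - blkShift n L * kronId L A) * (hankelMat L x * G)
      = (1 - blkShift n L * kronId L A) * hankelMat L x * G from (Matrix.mul_assoc _ _ _).symm,
    show (blkShift n L * kronId L B) * (hankelMat L u * G)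
      = (blkShift n L * kronId L B) * hankelMat L u * G from (Matrix.mul_assoc _ _ _).symm,
    ← Matrix.sub_mul, key hL hLT A B x u hdyn, Matrix.mul_assoc, hG, Matrix.mul_one]

end
end

section
/- (Noiseless data-driven achievability, converse direction.) Let A ∈ ℝ^{n×n}, B ∈ ℝ^{n×m}, 1 ≤ L ≤ T, and let x(0),…,x(T−1) ∈ ℝ^n, u(0),…,u(T−1) ∈ ℝ^m satisfy x(t+1) = A x(t) + B u(t) for 0 ≤ t ≤ T−2. Assume in addition that every pair (ξ, υ) ∈ ℝ^{nL} × ℝ^{mL} whose blocks ξ(0),…,ξ(L−1) ∈ ℝ^n, υ(0),…,υ(L−1) ∈ ℝ^m satisfy ξ(t+1) = A ξ(t) + B υ(t) for 0 ≤ t ≤ L−2 lies in the column space of the stacked matrix [𝓗_L(x); 𝓗_L(u)], i.e. there exists g ∈ ℝ^{T−L+1} with ξ = 𝓗_L(x) g and υ = 𝓗_L(u) g. Then for any Φx0 ∈ ℝ^{nL×n} and Φu0 ∈ ℝ^{mL×n} satisfying (I − Z𝒜) Φx0 − Zℬ Φu0 = E₁, there exists G ∈ ℝ^{(T−L+1)×n}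 with 𝓗_1(x) G = I_n, 𝓗_L(x) G = Φx0 and 𝓗_L(u) G = Φu0. -/
open Matrix

noncomputable section

/-!
Read column by column, the constraint `(I − Z𝒜) Φx0 − Zℬ Φu0 = E₁` says that the `c`-th columns of
`Φx0` and `Φu0` form an `L`-step trajectory of `(A, B)` whose first state is the unit vector `e_c`.
By the span hypothesis each such trajectory is `[𝓗_L(x); 𝓗_L(u)] g_c`; the matrix `G` with columns
`g_c` then reproduces `Φx0` and `Φu0`, and `𝓗_1(x) G`, the first block row of `𝓗_L(x) G = Φx0`,
is `I_n`.
-/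

def IsBlockTrajectory {n m L : ℕ} (A : Matrix (Fin n) (Fin n) ℝ) (B : Matrix (Fin n) (Fin m) ℝ)
    (xi : Fin L × Fin n → ℝ) (up : Fin L × Fin m → ℝ) : Prop :=
  ∀ (t : ℕ) (ht : t + 1 < L) (a : Fin n),
    xi (⟨t + 1, ht⟩, a) =
      (∑ b, A a b * xi (⟨t, Nat.lt_of_succ_lt ht⟩, b)) +
      (∑ b, B a b * up (⟨t, Nat.lt_of_succ_lt ht⟩, b))

section BlockMatrices

variable {n L : ℕ} {γ : Type}

lemma blkShift_mul_apply_zero (X : Matrix (Fin L × Fin n) γ ℝ) (hL : 0 < L)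
    (a : Fin n) (c : γ) : (blkShift n L * X) (⟨0, hL⟩, a) c = 0 := by
  simp [Matrix.mul_apply, blkShift]

lemma blkShift_mul_apply_succ (X : Matrix (Fin L × Fin n) γ ℝ) (t : ℕ) (ht : t + 1 < L)
    (a : Fin n) (c : γ) :
    (blkShift n L * X) (⟨t + 1, ht⟩, a) c = X (⟨t, Nat.lt_of_succ_lt ht⟩, a) c := by
  simp only [Matrix.mul_apply, blkShift, Matrix.of_apply]
  rw [Finset.sum_eq_single_of_mem (⟨t, Nat.lt_of_succ_lt ht⟩, a) (Finset.mem_univ _)]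
  · simp
  · rintro ⟨k, b⟩ _ hkb
    rw [if_neg, zero_mul]
    rintro ⟨hk, rfl⟩
    exact hkb (Prod.ext (Fin.ext (by simp at hk ⊢; omega)) rfl)

lemma kronId_mul_apply {α β : Type} [Fintype β] (M : Matrix α β ℝ)
    (X : Matrix (Fin L × β) γ ℝ) (k : Fin L) (a : α) (c : γ) :
    (kronId L M * X) (k, a) c = ∑ b, M a b * X (k, b) c := by
  simp only [Matrix.mul_apply, kronId, Matrix.of_apply, Fintype.sum_prod_type]
  rw [Finset.sum_eq_single_of_mem k (Finset.mem_univ _)]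
  · simp
  · intro j _ hj
    simp [Ne.symm hj]

end BlockMatrices

section ShiftConstraint

variable {n m L : ℕ} {A : Matrix (Fin n) (Fin n) ℝ} {B : Matrix (Fin n) (Fin m) ℝ}
  {Phix0 : Matrix (Fin L × Fin n) (Fin n) ℝ} {Phiu0 : Matrix (Fin L × Fin m) (Fin n) ℝ}

lemma apply_of_shift_constraint
    (hcon : (1 - blkShift n L * kronId L A) * Phix0 - (blkShift n L * kronId L B) * Phiu0 = E1 n L)
    (p : Fin L × Fin n) (c : Fin n) :
    Phix0 p c - (blkShift n L * (kronId L A * Phix0)) p c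
      - (blkShift n L * (kronId L B * Phiu0)) p c = E1 n L p c := by
  simp [← hcon, Matrix.sub_mul, Matrix.mul_assoc]

lemma isBlockTrajectory_of_shift_constraint
    (hcon : (1 - blkShift n L * kronId L A) * Phix0 - (blkShift n L * kronId L B) * Phiu0 = E1 n L)
    (c : Fin n) : IsBlockTrajectory A B (fun p => Phix0 p c) (fun p => Phiu0 p c) := by
  intro t ht a
  have h := apply_of_shift_constraint hcon (⟨t + 1, ht⟩, a) c
  simp [blkShift_mul_apply_succ, kronId_mul_apply, E1] at h
  linarith

lemma apply_zero_of_shift_constraint (hL : 0 < L)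
    (hcon : (1 - blkShift n L * kronId L A) * Phix0 - (blkShift n L * kronId L B) * Phiu0 = E1 n L)
    (a c : Fin n) : Phix0 (⟨0, hL⟩, a) c = (1 : Matrix (Fin n) (Fin n) ℝ) a c := by
  have h := apply_of_shift_constraint hcon (⟨0, hL⟩, a) c
  simpa [blkShift_mul_apply_zero, E1, Matrix.one_apply] using h

end ShiftConstraint

lemma hankelRow_mul_apply {L T p k : ℕ} (hL : 0 < L) (σ : Fin T → Fin p → ℝ)
    (G : Matrix (Fin (T - L + 1)) (Fin k) ℝ) (a : Fin p) (c : Fin k) :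
    (hankelRow L σ * G) a c = (hankelMat L σ * G) (⟨0, hL⟩, a) c := by
  simp [Matrix.mul_apply, hankelRow, hankelMat]

theorem stmt3_general {n m L T : ℕ} (hL : 1 ≤ L)
    (A : Matrix (Fin n) (Fin n) ℝ) (B : Matrix (Fin n) (Fin m) ℝ)
    (x : Fin T → Fin n → ℝ) (u : Fin T → Fin m → ℝ)
    (hspan : ∀ (xi : Fin L × Fin n → ℝ) (up : Fin L × Fin m → ℝ),
      (∀ (t : ℕ) (ht : t + 1 < L) (a : Fin n),
        xi (⟨t + 1, ht⟩, a) =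
          (∑ b, A a b * xi (⟨t, Nat.lt_of_succ_lt ht⟩, b)) +
          (∑ b, B a b * up (⟨t, Nat.lt_of_succ_lt ht⟩, b))) →
      ∃ g : Fin (T - L + 1) → ℝ, xi = hankelMat L x *ᵥ g ∧ up = hankelMat L u *ᵥ g) :
    ∀ (Phix0 : Matrix (Fin L × Fin n) (Fin n) ℝ) (Phiu0 : Matrix (Fin L × Fin m) (Fin n) ℝ),
      (1 - blkShift n L * kronId L A) * Phix0 - (blkShift n L * kronId L B) * Phiu0 = E1 n L →
      ∃ G : Matrix (Fin (T - L + 1)) (Fin n) ℝ,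
        hankelRow L x * G = 1 ∧ hankelMat L x * G = Phix0 ∧ hankelMat L u * G = Phiu0 := by
  intro Phix0 Phiu0 hcon
  choose g hgx hgu using fun c =>
    hspan (fun p => Phix0 p c) (fun p => Phiu0 p c) (isBlockTrajectory_of_shift_constraint hcon c)
  have hx : hankelMat L x * (Matrix.of g)ᵀ = Phix0 := by
    ext p c
    exact (congrFun (hgx c) p).symm
  have hu : hankelMat L u * (Matrix.of g)ᵀ = Phiu0 := by
    ext p c
    exact (congrFun (hgu c) p).symm
  refine ⟨(Matrix.of g)ᵀ, ?_, hx, hu⟩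
  ext a c
  rw [hankelRow_mul_apply hL, hx, apply_zero_of_shift_constraint hL hcon]

/-- Noiseless data-driven achievability, converse direction. -/
theorem stmt3 {n m L T : ℕ} (hL : 1 ≤ L) (hLT : L ≤ T)
    (A : Matrix (Fin n) (Fin n) ℝ) (B : Matrix (Fin n) (Fin m) ℝ)
    (x : Fin T → Fin n → ℝ) (u : Fin T → Fin m → ℝ)
    (hdyn : ∀ (t : ℕ) (ht : t + 1 < T),
      x ⟨t + 1, ht⟩ = A *ᵥ x ⟨t, Nat.lt_of_succ_lt ht⟩ + B *ᵥ u ⟨t, Nat.lt_of_succ_lt ht⟩)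
    (hspan : ∀ (xi : Fin L × Fin n → ℝ) (up : Fin L × Fin m → ℝ),
      (∀ (t : ℕ) (ht : t + 1 < L) (a : Fin n),
        xi (⟨t + 1, ht⟩, a) =
          (∑ b, A a b * xi (⟨t, Nat.lt_of_succ_lt ht⟩, b)) +
          (∑ b, B a b * up (⟨t, Nat.lt_of_succ_lt ht⟩, b))) →
      ∃ g : Fin (T - L + 1) → ℝ, xi = hankelMat L x *ᵥ g ∧ up = hankelMat L u *ᵥ g) :
    ∀ (Phix0 : Matrix (Fin L × Fin n) (Fin n) ℝ) (Phiu0 : Matrix (Fin L × Fin m) (Fin n) ℝ),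
      (1 - blkShift n L * kronId L A) * Phix0 - (blkShift n L * kronId L B) * Phiu0 = E1 n L →
      ∃ G : Matrix (Fin (T - L + 1)) (Fin n) ℝ,
        hankelRow L x * G = 1 ∧ hankelMat L x * G = Phix0 ∧ hankelMat L u * G = Phiu0 :=
  stmt3_general hL A B x u hspan

end
end

section
/- (Single block-column of the approximate system response.) Let A ∈ ℝ^{n×n}, B ∈ ℝ^{n×m}, 1 ≤ L ≤ T, and let x̃(0),…,x̃(T−1) ∈ ℝ^n, u(0),…,u(T−1) ∈ ℝ^m, w(0),…,w(T−1) ∈ ℝ^n satisfy x̃(t+1) = A x̃(t) + B u(t) + w(t) for 0 ≤ t ≤ T−2. If Ĝ ∈ ℝ^{(T−L+1)×n} satisfies 𝓗_1(x̃) Ĝ = I_n, then (I − Z𝒜) 𝓗_L(x̃) Ĝ − Zℬ 𝓗_L(u) Ĝ = E₁ + Z 𝓗_L(w) Ĝ. -/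
open Matrix

noncomputable section

lemma shift_mul_apply {n L : ℕ} {γ : Type} [Fintype γ] (M : Matrix (Fin L × Fin n) γ ℝ)
    (i : Fin L) (a : Fin n) (j : γ) :
    (blkShift n L * M) (i, a) j =
      if h : (i : ℕ) = 0 then 0
      else M (⟨(i : ℕ) - 1, by omega⟩, a) j := by
  simp only [blkShift, Matrix.mul_apply, Matrix.of_apply, ite_mul, one_mul, zero_mul]
  by_cases h : (i : ℕ) = 0
  · rw [dif_pos h]
    apply Finset.sum_eq_zero
    intro p _
    rw [if_neg]
    rintro ⟨h1, -⟩
    omega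
  · rw [dif_neg h]
    rw [Finset.sum_eq_single ((⟨(i:ℕ)-1, by omega⟩ : Fin L), a)]
    · rw [if_pos ⟨by simp; omega, rfl⟩]
    · rintro ⟨k, b⟩ _ hk
      rw [if_neg]
      rintro ⟨h1, h2⟩
      simp only at h1 h2
      exact hk (Prod.ext (Fin.ext (show (k:ℕ) = (i:ℕ) - 1 by omega)) h2.symm)
    · intro hmem
      exact absurd (Finset.mem_univ _) hmem

lemma kron_mul_hankel_apply {L T p q : ℕ} (C : Matrix (Fin p) (Fin q) ℝ)
    (σ : Fin T → Fin q → ℝ) (k : Fin L) (b : Fin p) (j : Fin (T - L + 1)) :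
    (kronId L C * hankelMat L σ) (k, b) j =
      ∑ c, C b c * hankelMat L σ (k, c) j := by
  simp only [kronId, Matrix.mul_apply, Matrix.of_apply, Fintype.sum_prod_type,
    ite_mul, zero_mul]
  rw [Finset.sum_eq_single k]
  · simp
  · intro k' _ hk'
    apply Finset.sum_eq_zero
    intro c _
    rw [if_neg (fun h => hk' h.symm)]
  · simp

lemma key_identity {n m L T : ℕ} (hL : 1 ≤ L) (hLT : L ≤ T)
    (A : Matrix (Fin n) (Fin n) ℝ) (B : Matrix (Fin n) (Fin m) ℝ)
    (x : Fin T → Fin n → ℝ) (u : Fin T → Fin m → ℝ) (w : Fin T → Fin n → ℝ)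
    (hdyn : ∀ (t : ℕ) (ht : t + 1 < T),
      x ⟨t + 1, ht⟩ = A *ᵥ x ⟨t, Nat.lt_of_succ_lt ht⟩ + B *ᵥ u ⟨t, Nat.lt_of_succ_lt ht⟩
        + w ⟨t, Nat.lt_of_succ_lt ht⟩) :
    (1 - blkShift n L * kronId L A) * hankelMat L x
      - blkShift n L * kronId L B * hankelMat L u
      - blkShift n L * hankelMat L w
      = E1 n L * hankelRow L x := by
  rw [Matrix.sub_mul, Matrix.one_mul, Matrix.mul_assoc (blkShift n L), Matrix.mul_assoc (blkShift n L)]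
  ext ⟨i, a⟩ j
  have hjT : (j : ℕ) < T := by have := j.isLt; omega
  have hij : (i : ℕ) + (j : ℕ) < T := by
    have := i.isLt; have := j.isLt; omega
  have hRHS : (E1 n L * hankelRow L x) (i, a) j
      = if (i : ℕ) = 0 then x ⟨j, hjT⟩ a else 0 := by
    simp only [E1, hankelRow, Matrix.mul_apply, Matrix.of_apply, ite_mul, one_mul, zero_mul]
    rw [Finset.sum_eq_single a]
    · by_cases h : (i : ℕ) = 0
      · rw [if_pos ⟨h, rfl⟩, dif_pos hjT, if_pos h]
      · rw [if_neg (fun hc => h hc.1), if_neg h]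
    · intro b _ hb
      rw [if_neg (fun hc => hb hc.2.symm)]
    · intro hmem; exact absurd (Finset.mem_univ _) hmem
  simp only [Matrix.sub_apply]
  rw [hRHS, shift_mul_apply, shift_mul_apply, shift_mul_apply]
  by_cases h : (i : ℕ) = 0
  · rw [dif_pos h, dif_pos h, dif_pos h, if_pos h]
    simp only [hankelMat, Matrix.of_apply, dif_pos hij]
    have : (⟨(i:ℕ) + (j:ℕ), hij⟩ : Fin T) = ⟨(j:ℕ), hjT⟩ :=
      Fin.ext (show (i:ℕ) + (j:ℕ) = (j:ℕ) by omega)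
    rw [this]
    ring
  · rw [dif_neg h, dif_neg h, dif_neg h, if_neg h]
    rw [kron_mul_hankel_apply, kron_mul_hankel_apply]
    have hij' : ((i:ℕ) - 1) + (j:ℕ) + 1 < T := by omega
    have hx := hdyn (((i:ℕ) - 1) + (j:ℕ)) hij'
    have h1 : (⟨(i:ℕ) + (j:ℕ), hij⟩ : Fin T) = ⟨((i:ℕ)-1) + (j:ℕ) + 1, hij'⟩ :=
      Fin.ext (show (i:ℕ) + (j:ℕ) = ((i:ℕ)-1) + (j:ℕ) + 1 by omega)
    have hkL : (i:ℕ) - 1 < L := by have := i.isLt; omega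
    have hd : ((⟨(i:ℕ)-1, hkL⟩ : Fin L) : ℕ) + (j:ℕ) < T := Nat.lt_of_succ_lt hij'
    simp only [hankelMat, Matrix.of_apply, dif_pos hij, dif_pos hd]
    rw [h1, hx]
    simp only [Pi.add_apply, Matrix.mulVec, dotProduct]
    ring


/-- Single block-column of the approximate system response. -/
theorem stmt5 {n m L T : ℕ} (hL : 1 ≤ L) (hLT : L ≤ T)
    (A : Matrix (Fin n) (Fin n) ℝ) (B : Matrix (Fin n) (Fin m) ℝ)
    (x : Fin T → Fin n → ℝ) (u : Fin T → Fin m → ℝ) (w : Fin T → Fin n → ℝ)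
    (hdyn : ∀ (t : ℕ) (ht : t + 1 < T),
      x ⟨t + 1, ht⟩ = A *ᵥ x ⟨t, Nat.lt_of_succ_lt ht⟩ + B *ᵥ u ⟨t, Nat.lt_of_succ_lt ht⟩
        + w ⟨t, Nat.lt_of_succ_lt ht⟩)
    (G : Matrix (Fin (T - L + 1)) (Fin n) ℝ)
    (hG : hankelRow L x * G = 1) :
    (1 - blkShift n L * kronId L A) * (hankelMat L x * G)
      - (blkShift n L * kronId L B) * (hankelMat L u * G)
      = E1 n L + blkShift n L * hankelMat L w * G := by
  have key := key_identity hL hLT A B x u w hdyn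
  have key2 : (1 - blkShift n L * kronId L A) * hankelMat L x
      - blkShift n L * kronId L B * hankelMat L u
      = E1 n L * hankelRow L x + blkShift n L * hankelMat L w := by
    rw [← key]; abel
  calc (1 - blkShift n L * kronId L A) * (hankelMat L x * G)
      - (blkShift n L * kronId L B) * (hankelMat L u * G)
      = ((1 - blkShift n L * kronId L A) * hankelMat L x
          - blkShift n L * kronId L B * hankelMat L u) * G := by
        simp only [Matrix.sub_mul, Matrix.mul_assoc, Matrix.one_mul]
    _ = (E1 n L * hankelRow L x + blkShift n L * hankelMat L w) * G := by rw [key2]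
    _ = E1 n L + blkShift n L * hankelMat L w * G := by
        rw [Matrix.add_mul, Matrix.mul_assoc, hG, Matrix.mul_one, Matrix.mul_assoc]

end
end

section
/- (Data-driven construction of approximate system responses from noisy data; Theorem on noisy data-driven SLS.) Let A ∈ ℝ^{n×n}, B ∈ ℝ^{n×m}, 1 ≤ L ≤ T, and let x̃(0),…,x̃(T−1) ∈ ℝ^n, u(0),…,u(T−1) ∈ ℝ^m, w(0),…,w(T−1) ∈ ℝ^n satisfy x̃(t+1) = A x̃(t) + B u(t) + w(t) for 0 ≤ t ≤ T−2. Let Ĝ ∈ ℝ^{(T−L+1)L×nL} be partitioned into L×L blocks Ĝ(i,j) ∈ ℝ^{(T−L+1)×n}, and assume: Ĝ is block-lower-triangular; 𝓗_1(x̃) Ĝ(i,i) = I_n for every 0 ≤ i ≤ L−1; and 𝓗_1(x̃) Ĝ(i,j) = 0 whenever i ≠ j. Define Φ̂x := 𝒵_L (I_L ⊗ 𝓗_L(x̃)) Ĝ ∈ ℝ^{nL×nL}, Φ̂u := 𝒵_L^{(m)} (I_L ⊗ 𝓗_L(u)) Ĝ ∈ ℝ^{mL×nL}, and Δ := 𝒵_L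 (I_L ⊗ Z 𝓗_L(w)) Ĝ ∈ ℝ^{nL×nL}. Then Φ̂x and Φ̂u are block-lower-triangular, Δ is strictly block-lower-triangular, and (I − Z𝒜) Φ̂x − Zℬ Φ̂u = I_{nL} + Δ. -/
open Matrix

noncomputable section

lemma blkShift_pow_apply (N L k : ℕ) (p q : Fin L × Fin N) :
    (blkShift N L ^ k) p q = if (p.1 : ℕ) = (q.1 : ℕ) + k ∧ p.2 = q.2 then 1 else 0 := by
  induction k generalizing q with
  | zero => simp [Matrix.one_apply, Prod.ext_iff, Fin.val_eq_val]
  | succ k ih =>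
    rw [pow_succ, mul_apply]
    simp only [ih]
    simp only [blkShift, of_apply, ite_mul, zero_mul, one_mul]
    by_cases h : (p.1:ℕ) = (q.1:ℕ) + (k+1) ∧ p.2 = q.2
    · have hq1 : (q.1:ℕ) + 1 < L := by have := p.1.isLt; omega
      rw [if_pos h, Finset.sum_eq_single (⟨⟨(q.1:ℕ)+1, hq1⟩, q.2⟩ : Fin L × Fin N)]
      · have h1 : (p.1:ℕ) = ((q.1:ℕ)+1) + k := by omega
        simp [h1, h.2]
      · intro r _ hr
        split_ifs with h1 h2
        · exact absurd (by ext <;> simp [Fin.ext_iff, h2.1, h2.2] :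
            r = ⟨⟨(q.1:ℕ)+1, hq1⟩, q.2⟩) hr
        · rfl
        · rfl
      · simp
    · rw [if_neg h]
      apply Finset.sum_eq_zero; intro r _
      split_ifs with h1 h2
      · exact absurd ⟨by omega, h1.2.trans h2.2⟩ h
      · rfl
      · rfl

lemma blkShift_pow_mul_apply {N L : ℕ} {γ : Type} [Fintype γ] (k : ℕ)
    (M : Matrix (Fin L × Fin N) γ ℝ) (i : Fin L) (a : Fin N) (c : γ) :
    (blkShift N L ^ k * M) (i, a) c
      = if h : k ≤ (i : ℕ) then M (⟨(i:ℕ) - k, by have := i.isLt; omega⟩, a) c else 0 := by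
  rw [mul_apply]
  simp only [blkShift_pow_apply]
  split_ifs with h
  · rw [Finset.sum_eq_single (⟨⟨(i:ℕ)-k, by have := i.isLt; omega⟩, a⟩ : Fin L × Fin N)]
    · simp
      omega
    · intro r _ hr
      rw [if_neg, zero_mul]
      intro hc
      exact hr (by ext <;> simp [Fin.ext_iff, ← hc.2] <;> omega)
    · simp
  · apply Finset.sum_eq_zero; intro r _
    rw [if_neg, zero_mul]
    intro hc
    omega

lemma blkShift_mul_apply {N L : ℕ} {γ : Type} [Fintype γ]
    (M : Matrix (Fin L × Fin N) γ ℝ) (i : Fin L) (a : Fin N) (c : γ) :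
    (blkShift N L * M) (i, a) c
      = if h : 1 ≤ (i : ℕ) then M (⟨(i:ℕ) - 1, by have := i.isLt; omega⟩, a) c else 0 := by
  rw [← pow_one (blkShift N L), blkShift_pow_mul_apply]

lemma zcat_kron {L N S : ℕ} (H : Matrix (Fin L × Fin N) (Fin S) ℝ) :
    zcat N L * kronId L H
      = Matrix.of (fun p ks => (blkShift N L ^ (ks.1 : ℕ) * H) p ks.2) := by
  ext p ⟨k, s⟩
  simp [mul_apply, zcat, kronId, Fintype.sum_prod_type, mul_ite, mul_zero,
    Finset.sum_ite_irrel, Finset.sum_const_zero, Finset.sum_ite_eq, Finset.sum_ite_eq']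

lemma zcat_mul {L N S : ℕ} {γ : Type} [Fintype γ] (H : Matrix (Fin L × Fin N) (Fin S) ℝ)
    (G : Matrix (Fin L × Fin S) γ ℝ) :
    zcat N L * kronId L H * G
      = ∑ k : Fin L, blkShift N L ^ (k : ℕ) * H * Matrix.of (fun s c => G (k, s) c) := by
  rw [zcat_kron]
  ext p c
  simp [mul_apply, Matrix.sum_apply, Fintype.sum_prod_type]

lemma kron_blkShift_comm {L N M' : ℕ} (M : Matrix (Fin N) (Fin M') ℝ) :
    kronId L M * blkShift M' L = blkShift N L * kronId L M := by
  ext ⟨i, a⟩ ⟨j, b⟩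
  simp only [mul_apply, kronId, blkShift, of_apply, Fintype.sum_prod_type, mul_ite, mul_zero,
    mul_one, ite_mul, zero_mul, one_mul, ite_and, Finset.sum_ite_irrel, Finset.sum_const_zero,
    Finset.sum_ite_eq, Finset.sum_ite_eq', Finset.mem_univ, if_true]
  by_cases h : (i : ℕ) = (j : ℕ) + 1
  · rw [if_pos h, Finset.sum_eq_single i]
    · simp [h]
    · intro r _ hr
      split_ifs with h1 h2
      · exact absurd h2.symm hr
      · rfl
      · rfl
    · simp
  · rw [if_neg h]
    apply Finset.sum_eq_zero
    intro r _
    split_ifs with h1 h2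
    · exact absurd (h2 ▸ h1) h
    · rfl
    · rfl

lemma kron_blkShift_pow_comm {L N M' : ℕ} (M : Matrix (Fin N) (Fin M') ℝ) (k : ℕ) :
    kronId L M * blkShift M' L ^ k = blkShift N L ^ k * kronId L M := by
  induction k with
  | zero => simp
  | succ k ih =>
    rw [pow_succ, ← Matrix.mul_assoc, ih, Matrix.mul_assoc, kron_blkShift_comm,
      ← Matrix.mul_assoc, ← pow_succ]

lemma kron_pow_shift {L N M' : ℕ} {γ : Type} [Fintype γ] (M : Matrix (Fin N) (Fin M') ℝ)
    (k : ℕ) (X : Matrix (Fin L × Fin M') γ ℝ) :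
    kronId L M * (blkShift M' L ^ k * X) = blkShift N L ^ k * (kronId L M * X) := by
  rw [← Matrix.mul_assoc, kron_blkShift_pow_comm, Matrix.mul_assoc]

lemma shift_pow_shift {L N : ℕ} {γ : Type} [Fintype γ] (k : ℕ)
    (X : Matrix (Fin L × Fin N) γ ℝ) :
    blkShift N L * (blkShift N L ^ k * X) = blkShift N L ^ k * (blkShift N L * X) := by
  rw [← Matrix.mul_assoc, ← pow_succ', pow_succ, Matrix.mul_assoc]

lemma E1_mul_apply {n L : ℕ} {γ : Type} [Fintype γ] (M : Matrix (Fin n) γ ℝ)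
    (p : Fin L × Fin n) (c : γ) :
    (E1 n L * M) p c = if (p.1 : ℕ) = 0 then M p.2 c else 0 := by
  rw [mul_apply]
  simp [E1, ite_and, ite_mul, zero_mul, one_mul, Finset.sum_ite_irrel,
    Finset.sum_const_zero, Finset.sum_ite_eq]

lemma key_dyn {n m L T : ℕ} (hLT : L ≤ T)
    (A : Matrix (Fin n) (Fin n) ℝ) (B : Matrix (Fin n) (Fin m) ℝ)
    (x : Fin T → Fin n → ℝ) (u : Fin T → Fin m → ℝ) (w : Fin T → Fin n → ℝ)
    (hdyn : ∀ (t : ℕ) (ht : t + 1 < T),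
      x ⟨t + 1, ht⟩ = A *ᵥ x ⟨t, Nat.lt_of_succ_lt ht⟩ + B *ᵥ u ⟨t, Nat.lt_of_succ_lt ht⟩
        + w ⟨t, Nat.lt_of_succ_lt ht⟩) :
    hankelMat L x = E1 n L * hankelRow L x
      + blkShift n L * (kronId L A * hankelMat L x + kronId L B * hankelMat L u
          + hankelMat L w) := by
  ext ⟨i, a⟩ s
  have hiT : (i:ℕ) + (s:ℕ) < T := by have := i.isLt; have := s.isLt; omega
  have hsT : (s:ℕ) < T := by omega
  have hE : (E1 n L * hankelRow L x) (i, a) s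
      = if (i:ℕ) = 0 then x ⟨s, hsT⟩ a else 0 := by
    rw [E1_mul_apply]
    simp [hankelRow, hsT]
  have hA : ∀ (c : Fin L) (hc : (c:ℕ) + (s:ℕ) < T),
      (kronId L A * hankelMat L x) (c, a) s = (A *ᵥ x ⟨(c:ℕ) + s, hc⟩) a := by
    intro c hc
    rw [mul_apply, Fintype.sum_prod_type]
    simp only [kronId, of_apply, ite_mul, zero_mul, Finset.sum_ite_irrel,
      Finset.sum_const_zero, Finset.sum_ite_eq, Finset.mem_univ, if_true]
    simp [hankelMat, hc, mulVec, dotProduct]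
  have hB : ∀ (c : Fin L) (hc : (c:ℕ) + (s:ℕ) < T),
      (kronId L B * hankelMat L u) (c, a) s = (B *ᵥ u ⟨(c:ℕ) + s, hc⟩) a := by
    intro c hc
    rw [mul_apply, Fintype.sum_prod_type]
    simp only [kronId, of_apply, ite_mul, zero_mul, Finset.sum_ite_irrel,
      Finset.sum_const_zero, Finset.sum_ite_eq, Finset.mem_univ, if_true]
    simp [hankelMat, hc, mulVec, dotProduct]
  rw [Matrix.add_apply, hE, blkShift_mul_apply]
  by_cases h1 : 1 ≤ (i:ℕ)
  · rw [dif_pos h1, if_neg (by omega), zero_add, Matrix.add_apply, Matrix.add_apply,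
      hA _ (by omega : ((⟨(i:ℕ)-1, by have := i.isLt; omega⟩ : Fin L) : ℕ) + (s:ℕ) < T),
      hB _ (by omega : ((⟨(i:ℕ)-1, by have := i.isLt; omega⟩ : Fin L) : ℕ) + (s:ℕ) < T)]
    have hdd := congrFun (hdyn ((i:ℕ) - 1 + (s:ℕ)) (by omega)) a
    simp only [Pi.add_apply] at hdd
    have hidx : (⟨(i:ℕ) - 1 + (s:ℕ) + 1, by omega⟩ : Fin T) = ⟨(i:ℕ) + (s:ℕ), hiT⟩ :=
      Fin.ext (by simp; omega)
    rw [hidx] at hdd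
    have hw' : (i:ℕ) - 1 + (s:ℕ) < T := by omega
    simp only [hankelMat, of_apply, dif_pos hiT]
    rw [hdd]
    simp [hw']
  · rw [dif_neg h1, if_pos (by omega), add_zero]
    simp only [hankelMat, of_apply, dif_pos hiT]
    congr 1
    apply Fin.ext; simp; omega

/-- Data-driven construction of approximate system responses from noisy data. -/
theorem stmt7 {n m L T : ℕ} (hL : 1 ≤ L) (hLT : L ≤ T)
    (A : Matrix (Fin n) (Fin n) ℝ) (B : Matrix (Fin n) (Fin m) ℝ)
    (x : Fin T → Fin n → ℝ) (u : Fin T → Fin m → ℝ) (w : Fin T → Fin n → ℝ)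
    (hdyn : ∀ (t : ℕ) (ht : t + 1 < T),
      x ⟨t + 1, ht⟩ = A *ᵥ x ⟨t, Nat.lt_of_succ_lt ht⟩ + B *ᵥ u ⟨t, Nat.lt_of_succ_lt ht⟩
        + w ⟨t, Nat.lt_of_succ_lt ht⟩)
    (G : Matrix (Fin L × Fin (T - L + 1)) (Fin L × Fin n) ℝ)
    (hGlt : BlockLT G)
    (hGdiag : ∀ i : Fin L,
      hankelRow L x * (Matrix.of fun s b => G (i, s) (i, b)) = 1)
    (hGoff : ∀ i j : Fin L, i ≠ j →
      hankelRow L x * (Matrix.of fun s b => G (i, s) (j, b)) = 0) :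
    BlockLT (zcat n L * kronId L (hankelMat L x) * G) ∧
    BlockLT (zcat m L * kronId L (hankelMat L u) * G) ∧
    StrictBlockLT (zcat n L * kronId L (blkShift n L * hankelMat L w) * G) ∧
    (1 - blkShift n L * kronId L A) * (zcat n L * kronId L (hankelMat L x) * G)
      - (blkShift n L * kronId L B) * (zcat m L * kronId L (hankelMat L u) * G)
      = 1 + zcat n L * kronId L (blkShift n L * hankelMat L w) * G := by
  -- triangularity of a generic response matrix
  have htri : ∀ (N : ℕ) (H : Matrix (Fin L × Fin N) (Fin (T - L + 1)) ℝ),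
      BlockLT (zcat N L * kronId L H * G) := by
    intro N H ⟨i, a⟩ ⟨j, b⟩ hij
    rw [zcat_mul, Matrix.sum_apply]
    apply Finset.sum_eq_zero
    intro k _
    rw [mul_apply]
    apply Finset.sum_eq_zero
    intro s _
    rw [blkShift_pow_mul_apply]
    split_ifs with h
    · rw [of_apply, hGlt (k, s) (j, b) (by simp at hij ⊢; omega), mul_zero]
    · exact zero_mul _
  have hstri : StrictBlockLT (zcat n L * kronId L (blkShift n L * hankelMat L w) * G) := by
    intro ⟨i, a⟩ ⟨j, b⟩ hij
    rw [zcat_mul, Matrix.sum_apply]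
    apply Finset.sum_eq_zero
    intro k _
    rw [mul_apply]
    apply Finset.sum_eq_zero
    intro s _
    rw [← Matrix.mul_assoc, ← pow_succ, blkShift_pow_mul_apply]
    split_ifs with h
    · rw [of_apply, hGlt (k, s) (j, b) (by simp at hij ⊢; omega), mul_zero]
    · exact zero_mul _
  refine ⟨htri n (hankelMat L x), htri m (hankelMat L u), hstri, ?_⟩
  -- the diagonal blocks
  have hRG : ∀ (k j : Fin L) (a b : Fin n),
      (hankelRow L x * Matrix.of (fun s c => G (k, s) c)) a (j, b)
        = if j = k then (if a = b then (1:ℝ) else 0) else 0 := by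
    intro k j a b
    by_cases hjk : j = k
    · subst hjk
      have h2 : (hankelRow L x * Matrix.of (fun s c => G (j, s) c)) a (j, b)
          = (hankelRow L x * Matrix.of (fun s b' => G (j, s) (j, b'))) a b := by
        simp [mul_apply]
      rw [h2, hGdiag]
      simp [Matrix.one_apply]
    · have h2 : (hankelRow L x * Matrix.of (fun s c => G (k, s) c)) a (j, b)
          = (hankelRow L x * Matrix.of (fun s b' => G (k, s) (j, b'))) a b := by
        simp [mul_apply]
      rw [h2, hGoff k j (fun h => hjk h.symm)]
      simp [hjk]
  have diag_term : ∀ k : Fin L,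
      blkShift n L ^ (k:ℕ) * (E1 n L * (hankelRow L x * Matrix.of (fun s c => G (k, s) c)))
        = Matrix.of (fun p q => if p.1 = k ∧ q.1 = k ∧ p.2 = q.2 then (1:ℝ) else 0) := by
    intro k
    ext ⟨i, a⟩ ⟨j, b⟩
    rw [blkShift_pow_mul_apply]
    by_cases h : (k:ℕ) ≤ (i:ℕ)
    · rw [dif_pos h, E1_mul_apply, of_apply]
      simp only [hRG]
      split_ifs with h1 h2 h3 h4 h5 <;>
        simp_all [Fin.ext_iff] <;> omega
    · rw [dif_neg h, of_apply, if_neg]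
      rintro ⟨h1, -, -⟩
      exact h (le_of_eq (congrArg Fin.val h1).symm)
  have sum_diag : (∑ k : Fin L,
      Matrix.of (fun (p q : Fin L × Fin n) => if p.1 = k ∧ q.1 = k ∧ p.2 = q.2 then (1:ℝ) else 0))
        = 1 := by
    ext ⟨i, a⟩ ⟨j, b⟩
    simp only [Matrix.sum_apply, of_apply, Matrix.one_apply, Prod.ext_iff, ite_and,
      Finset.sum_ite_eq, Finset.mem_univ, if_true]
    by_cases h1 : j = i
    · subst h1; simp
    · simp [h1, Ne.symm h1]
  -- core algebraic identity
  have hk := key_dyn hLT A B x u w hdyn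
  have h2 : hankelMat L x - blkShift n L * kronId L A * hankelMat L x
      - blkShift n L * kronId L B * hankelMat L u
      = E1 n L * hankelRow L x + blkShift n L * hankelMat L w := by
    nth_rewrite 1 [hk]
    simp only [Matrix.mul_add, Matrix.mul_assoc]
    abel
  have perterm : ∀ k : Fin L,
      blkShift n L ^ (k:ℕ) * hankelMat L x * Matrix.of (fun s c => G (k, s) c)
        - blkShift n L * kronId L A *
            (blkShift n L ^ (k:ℕ) * hankelMat L x * Matrix.of (fun s c => G (k, s) c))
        - blkShift n L * kronId L B *
            (blkShift m L ^ (k:ℕ) * hankelMat L u * Matrix.of (fun s c => G (k, s) c))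
      = Matrix.of (fun (p q : Fin L × Fin n) =>
            if p.1 = k ∧ q.1 = k ∧ p.2 = q.2 then (1:ℝ) else 0)
        + blkShift n L ^ (k:ℕ) * (blkShift n L * hankelMat L w)
            * Matrix.of (fun s c => G (k, s) c) := by
    intro k
    rw [← diag_term k]
    simp only [Matrix.mul_assoc]
    rw [kron_pow_shift, kron_pow_shift, shift_pow_shift, shift_pow_shift,
      ← Matrix.mul_sub, ← Matrix.mul_sub, ← Matrix.mul_add]
    congr 1
    have h3 := congrArg (· * Matrix.of (fun s c => G (k, s) c)) h2
    simp only [Matrix.sub_mul, Matrix.add_mul, Matrix.mul_assoc] at h3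
    exact h3
  rw [zcat_mul (hankelMat L x) G, zcat_mul (hankelMat L u) G,
    zcat_mul (blkShift n L * hankelMat L w) G,
    Matrix.sub_mul, Matrix.one_mul, Matrix.mul_sum, Matrix.mul_sum,
    ← Finset.sum_sub_distrib, ← Finset.sum_sub_distrib,
    Finset.sum_congr rfl (fun k _ => perterm k),
    Finset.sum_add_distrib, sum_diag]

end
end

section
/- (Helper identity for the noisy data-driven construction.) Let A ∈ ℝ^{n×n}, B ∈ ℝ^{n×m}, 1 ≤ L ≤ T, and let x̃(0),…,x̃(T−1) ∈ ℝ^n, u(0),…,u(T−1) ∈ ℝ^m, w(0),…,w(T−1) ∈ ℝ^n satisfy x̃(t+1) = A x̃(t) + B u(t) + w(t) for 0 ≤ t ≤ T−2. Then (I − Z𝒜) 𝒵_L (I_L ⊗ 𝓗_L(x̃)) − Zℬ 𝒵_L^{(m)} (I_L ⊗ 𝓗_L(u)) = 𝒵_L (I_L ⊗ (E₁ 𝓗_1(x̃) + Z 𝓗_L(w))). -/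
open Matrix

noncomputable section

lemma kronId_one (n L : ℕ) : kronId L (1 : Matrix (Fin n) (Fin n) ℝ) = 1 := by
  ext p q
  simp [kronId, Matrix.one_apply, Prod.ext_iff, ite_and]

lemma sum_coe_ite {M : Type} [AddCommMonoid M] {L : ℕ} (f : Fin L → M) (t : ℕ) :
    (∑ j : Fin L, if (j : ℕ) = t then f j else 0) = if h : t < L then f ⟨t, h⟩ else 0 := by
  split
  · next h =>
    rw [Finset.sum_eq_single (⟨t, h⟩ : Fin L)]
    · simp
    · intro j _ hj; rw [if_neg]; simpa [Fin.ext_iff] using hj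
    · simp
  · next h =>
    apply Finset.sum_eq_zero; intro j _; rw [if_neg]; intro hj; exact h (hj ▸ j.isLt)

lemma blkShift_apply (n L : ℕ) (p q : Fin L × Fin n) :
    blkShift n L p q = if (p.1 : ℕ) = (q.1 : ℕ) + 1 ∧ p.2 = q.2 then 1 else 0 := rfl

lemma blkShift_pow (n L k : ℕ) (p q : Fin L × Fin n) :
    (blkShift n L ^ k) p q = if (p.1 : ℕ) = (q.1 : ℕ) + k ∧ p.2 = q.2 then 1 else 0 := by
  induction k generalizing q with
  | zero => simp [Matrix.one_apply, Prod.ext_iff, Fin.ext_iff, and_comm]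
  | succ k ih =>
    rw [pow_succ, Matrix.mul_apply]
    simp only [blkShift_apply]
    rw [Fintype.sum_prod_type]
    have : ∀ j : Fin L, (∑ b : Fin n, (blkShift n L ^ k) p (j, b) *
        if (j : ℕ) = (q.1 : ℕ) + 1 ∧ b = q.2 then 1 else 0)
        = if (j : ℕ) = (q.1 : ℕ) + 1 then (blkShift n L ^ k) p (j, q.2) else 0 := by
      intro j
      simp only [ih]
      rw [Finset.sum_eq_single q.2] <;> intros <;>
        simp_all (config := {decide := false}) [eq_comm] <;> tauto
    rw [Finset.sum_congr rfl (fun j _ => this j), sum_coe_ite]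
    split
    · next h =>
      rw [ih]
      simp only [Fin.ext_iff]
      congr 1
      simp only [eq_iff_iff]
      constructor <;> (rintro ⟨h1, h2⟩; exact ⟨by omega, h2⟩)
    · next h =>
      rw [if_neg]
      rintro ⟨h1, -⟩
      exact h (by omega)

lemma zcat_mul_kron (n L : ℕ) {γ : Type} [Fintype γ] (M : Matrix (Fin L × Fin n) γ ℝ)
    (i k : Fin L) (a : Fin n) (c : γ) :
    (zcat n L * kronId L M) (i, a) (k, c)
      = if h : (k : ℕ) ≤ (i : ℕ) then M (⟨i - k, by omega⟩, a) c else 0 := by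
  rw [Matrix.mul_apply, Fintype.sum_prod_type]
  simp only [zcat, kronId, Matrix.of_apply]
  have step : ∀ k' : Fin L, (∑ s : Fin L × Fin n, (blkShift n L ^ (k' : ℕ)) (i, a) s *
      if k' = k then M s c else 0)
      = if k' = k then ∑ s : Fin L × Fin n, (blkShift n L ^ (k' : ℕ)) (i, a) s * M s c else 0 := by
    intro k'; split <;> simp_all
  rw [Finset.sum_congr rfl (fun k' _ => step k'), Finset.sum_ite_eq' _ k, if_pos (Finset.mem_univ k)]
  rw [Fintype.sum_prod_type]
  have step2 : ∀ j : Fin L, (∑ b : Fin n, (blkShift n L ^ (k : ℕ)) (i, a) (j, b) * M (j, b) c)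
      = if (j : ℕ) = (i : ℕ) - k ∧ (k : ℕ) ≤ i then M (j, a) c else 0 := by
    intro j
    simp only [blkShift_pow]
    rw [Finset.sum_eq_single a]
    · by_cases hh : (i : ℕ) = (j : ℕ) + k
      · rw [if_pos ⟨hh, rfl⟩, if_pos ⟨by omega, by omega⟩, one_mul]
      · rw [if_neg (by tauto), if_neg (by omega), zero_mul]
    · intro b _ hb; rw [if_neg (by tauto), zero_mul]
    · simp
  rw [Finset.sum_congr rfl (fun j _ => step2 j)]
  have : ∀ j : Fin L, (if (j : ℕ) = (i : ℕ) - k ∧ (k : ℕ) ≤ i then M (j, a) c else 0)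
      = if (j : ℕ) = (i : ℕ) - k then (if (k:ℕ) ≤ i then M (j, a) c else 0) else 0 := by
    intro j; by_cases h1 : (j:ℕ) = (i:ℕ) - k <;> by_cases h2 : (k:ℕ) ≤ (i:ℕ) <;> simp_all
  rw [Finset.sum_congr rfl (fun j _ => this j), sum_coe_ite]
  rw [dif_pos (by omega : (i:ℕ) - k < L)]
  split <;> rfl

lemma shift_kron_apply (n m' L : ℕ) (C : Matrix (Fin n) (Fin m') ℝ)
    (i : Fin L) (a : Fin n) (s : Fin L × Fin m') :
    (blkShift n L * kronId L C) (i, a) s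
      = if (i : ℕ) = (s.1 : ℕ) + 1 then C a s.2 else 0 := by
  rw [Matrix.mul_apply, Finset.sum_eq_single ((s.1, a) : Fin L × Fin n)]
  · simp [blkShift_apply, kronId]
  · rintro ⟨j', b'⟩ - hne
    simp only [blkShift_apply, kronId, Matrix.of_apply]
    by_cases h1 : j' = s.1
    · subst h1
      rw [if_neg (by rintro ⟨-, h⟩; exact hne (by simp [h]))]
      simp
    · rw [show (if j' = s.1 then C b' s.2 else 0) = 0 from if_neg h1, mul_zero]
  · simp

lemma shift_kron_mul (n m' L : ℕ) {γ : Type} [Fintype γ] (C : Matrix (Fin n) (Fin m') ℝ)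
    (M : Matrix (Fin L × Fin m') γ ℝ) (i : Fin L) (a : Fin n) (q : γ) :
    ((blkShift n L * kronId L C) * M) (i, a) q
      = if h : 1 ≤ (i : ℕ) then (C *ᵥ fun b => M (⟨(i : ℕ) - 1, by omega⟩, b) q) a else 0 := by
  rw [Matrix.mul_apply]
  simp only [shift_kron_apply]
  rw [Fintype.sum_prod_type]
  have step : ∀ j : Fin L, (∑ b : Fin m', (if (i : ℕ) = (j : ℕ) + 1 then C a b else 0) * M (j, b) q)
      = if (j : ℕ) = (i : ℕ) - 1 then (if 1 ≤ (i : ℕ) then ∑ b : Fin m', C a b * M (j, b) q else 0)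
        else 0 := by
    intro j
    by_cases h1 : (i : ℕ) = (j : ℕ) + 1
    · rw [if_pos (by omega), if_pos (by omega)]
      simp [h1]
    · rw [Finset.sum_congr rfl (fun b _ => by rw [if_neg h1, zero_mul])]
      by_cases h2 : (j : ℕ) = (i : ℕ) - 1
      · rw [if_pos h2, if_neg (by omega)]
        simp
      · rw [if_neg h2]
        simp
  rw [Finset.sum_congr rfl (fun j _ => step j), sum_coe_ite, dif_pos (by omega : (i:ℕ) - 1 < L)]
  split <;> simp [Matrix.mulVec, dotProduct]


lemma E1_mul_row (n L T : ℕ) (x : Fin T → Fin n → ℝ) (j : Fin L) (a : Fin n)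
    (col : Fin (T - L + 1)) :
    (E1 n L * hankelRow L x) (j, a) col
      = if (j : ℕ) = 0 then hankelRow L x a col else 0 := by
  rw [Matrix.mul_apply, Finset.sum_eq_single a]
  · by_cases h : (j : ℕ) = 0 <;> simp [E1, h]
  · intro b _ hb
    simp only [E1, Matrix.of_apply]
    rw [if_neg (by rintro ⟨-, h⟩; exact hb h.symm), zero_mul]
  · simp

lemma shift_mul_hankel (n L T : ℕ) (w : Fin T → Fin n → ℝ) (j : Fin L) (a : Fin n)
    (col : Fin (T - L + 1)) :
    (blkShift n L * hankelMat L w) (j, a) col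
      = if h : 1 ≤ (j : ℕ) then hankelMat L w (⟨(j : ℕ) - 1, by omega⟩, a) col else 0 := by
  have h1 : blkShift n L * hankelMat L w
      = (blkShift n L * kronId L (1 : Matrix (Fin n) (Fin n) ℝ)) * hankelMat L w := by
    rw [kronId_one, mul_one]
  rw [h1, shift_kron_mul]
  split <;> simp [Matrix.one_mulVec]


/-- Helper identity for the noisy data-driven construction. -/
theorem stmt8 {n m L T : ℕ} (hL : 1 ≤ L) (hLT : L ≤ T)
    (A : Matrix (Fin n) (Fin n) ℝ) (B : Matrix (Fin n) (Fin m) ℝ)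
    (x : Fin T → Fin n → ℝ) (u : Fin T → Fin m → ℝ) (w : Fin T → Fin n → ℝ)
    (hdyn : ∀ (t : ℕ) (ht : t + 1 < T),
      x ⟨t + 1, ht⟩ = A *ᵥ x ⟨t, Nat.lt_of_succ_lt ht⟩ + B *ᵥ u ⟨t, Nat.lt_of_succ_lt ht⟩
        + w ⟨t, Nat.lt_of_succ_lt ht⟩) :
    (1 - blkShift n L * kronId L A) * (zcat n L * kronId L (hankelMat L x))
      - (blkShift n L * kronId L B) * (zcat m L * kronId L (hankelMat L u))
      = zcat n L * kronId L (E1 n L * hankelRow L x + blkShift n L * hankelMat L w) := by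
  ext ⟨i, a⟩ ⟨k, col⟩
  have hiL : (i : ℕ) < L := i.isLt
  have hkL : (k : ℕ) < L := k.isLt
  have hcol : (col : ℕ) < T - L + 1 := col.isLt
  rw [Matrix.sub_mul, Matrix.one_mul]
  simp only [Matrix.sub_apply, zcat_mul_kron, shift_kron_mul, Matrix.add_apply,
    E1_mul_row, shift_mul_hankel]
  by_cases hki : (k : ℕ) ≤ (i : ℕ)
  · simp only [dif_pos hki]
    by_cases hik : (i : ℕ) - (k : ℕ) = 0
    · have hik' : ¬ 1 ≤ (i : ℕ) - (k : ℕ) := by omega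
      have hcolT : (col : ℕ) < T := by omega
      simp only [if_pos hik, dif_neg hik']
      by_cases hi1 : 1 ≤ (i : ℕ)
      · have hk1 : ¬ (k : ℕ) ≤ (i : ℕ) - 1 := by omega
        simp only [dif_pos hi1, dif_neg hk1]
        simp [hankelMat, hankelRow, hik, Matrix.mulVec, dotProduct, hcolT]
      · simp only [dif_neg hi1]
        simp [hankelMat, hankelRow, hik, hcolT]
    · have hd1 : 1 ≤ (i : ℕ) - (k : ℕ) := by omega
      have hi1 : 1 ≤ (i : ℕ) := by omega
      have hk1 : (k : ℕ) ≤ (i : ℕ) - 1 := by omega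
      simp only [if_neg hik, dif_pos hd1, dif_pos hi1, dif_pos hk1]
      simp only [hankelMat, Matrix.of_apply]
      have e1 : (i : ℕ) - (k : ℕ) - 1 = (i : ℕ) - 1 - (k : ℕ) := by omega
      have e2 : (i : ℕ) - (k : ℕ) + (col : ℕ) = ((i : ℕ) - 1 - (k : ℕ) + (col : ℕ)) + 1 := by
        omega
      simp only [e1, e2]
      have h1 : (i : ℕ) - 1 - (k : ℕ) + (col : ℕ) + 1 < T := by omega
      have h2 : (i : ℕ) - 1 - (k : ℕ) + (col : ℕ) < T := by omega
      simp only [dif_pos h1, dif_pos h2]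
      have key := congrFun (hdyn ((i : ℕ) - 1 - (k : ℕ) + (col : ℕ)) h1) a
      simp only [Pi.add_apply] at key
      rw [key]
      ring
  · have hk1 : ¬ (k : ℕ) ≤ (i : ℕ) - 1 := by omega
    simp only [dif_neg hki, dif_neg hk1]
    simp [Matrix.mulVec, dotProduct]

end
end

section
/- (Spectral norm of the all-ones upper-triangular matrix.) Let L ≥ 1 and let U_L ∈ ℝ^{L×L} be the upper-triangular matrix all of whose entries on and above the diagonal equal 1 (and 0 below). Then ‖U_L‖₂ = 1 / (2 sin(π / (4L + 2))), and for every L ≥ 3, ‖U_L‖₂ ≤ (2L + log L) / π. -/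
open Matrix

noncomputable section

/-- The upper-triangular matrix of all ones. -/
def UL (L : ℕ) : Matrix (Fin L) (Fin L) ℝ :=
  Matrix.of fun i j => if i ≤ j then 1 else 0

namespace Stmt11Aux
open Finset

def th (L : ℕ) : ℝ := Real.pi / (4 * L + 2)

def w (L : ℕ) (i : ℕ) : ℝ := Real.cos ((2 * (i : ℝ) + 1) * th L)

def lam (L : ℕ) : ℝ := 2 - 2 * Real.cos (2 * th L)

lemma th_pos (L : ℕ) : 0 < th L := by
  have : (0:ℝ) < 4 * L + 2 := by positivity
  exact div_pos Real.pi_pos this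

lemma half (L : ℕ) : (2 * (L:ℝ) + 1) * th L = Real.pi / 2 := by
  have h : (4 * (L:ℝ) + 2) ≠ 0 := by positivity
  unfold th
  field_simp
  ring

lemma wL0 (L : ℕ) : w L L = 0 := by
  rw [w, half, Real.cos_pi_div_two]

lemma w_pos {L i : ℕ} (hi : i < L) : 0 < w L i := by
  apply Real.cos_pos_of_mem_Ioo
  constructor
  · have h1 : (0:ℝ) < (2 * (i:ℝ) + 1) * th L :=
      mul_pos (by positivity) (th_pos L)
    have := Real.pi_pos
    nlinarith [th_pos L]
  · have : (2 * (i:ℝ) + 1) * th L < (2 * (L:ℝ) + 1) * th L := by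
      have hi' : (i:ℝ) < L := by exact_mod_cast hi
      nlinarith [th_pos L]
    rw [half] at this
    exact this

lemma key (t a : ℝ) :
    2 * Real.cos a - Real.cos (a + 2 * t) - Real.cos (a - 2 * t)
      = (2 - 2 * Real.cos (2 * t)) * Real.cos a := by
  have h1 := Real.cos_add a (2 * t)
  have h2 := Real.cos_sub a (2 * t)
  linear_combination (-1) * h1 + (-1) * h2

lemma eigen (L j : ℕ) : 2 * w L j - w L (j + 1) - w L (j - 1) = lam L * w L j := by
  unfold w lam
  cases j with
  | zero =>
    have e0 : (2 * ((0:ℕ):ℝ) + 1) * th L = th L := by push_cast; ring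
    have e1 : (2 * ((0+1:ℕ):ℝ) + 1) * th L = th L + 2 * th L := by push_cast; ring
    have hneg : Real.cos (th L - 2 * th L) = Real.cos (th L) := by
      rw [show th L - 2 * th L = -(th L) by ring, Real.cos_neg]
    have k := key (th L) (th L)
    rw [hneg] at k
    simp only [Nat.zero_sub, e0]
    rw [show ((0:ℕ) + 1 : ℕ) = (1:ℕ) from rfl]
    rw [show (2 * ((1:ℕ):ℝ) + 1) * th L = th L + 2 * th L by push_cast; ring]
    linarith [k]
  | succ k =>
    have e1 : (2 * ((k+1:ℕ):ℝ) + 1) * th L = (2 * (k:ℝ) + 3) * th L := by push_cast; ring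
    have e2 : (2 * ((k+1+1:ℕ):ℝ) + 1) * th L = (2 * (k:ℝ) + 3) * th L + 2 * th L := by
      push_cast; ring
    have e3 : (2 * ((k:ℕ):ℝ) + 1) * th L = (2 * (k:ℝ) + 3) * th L - 2 * th L := by
      push_cast; ring
    have hk := key (th L) ((2 * (k:ℝ) + 3) * th L)
    simp only [Nat.add_sub_cancel]
    rw [e1, e2, e3]
    linarith [hk]

lemma lam_eq (L : ℕ) : lam L = (2 * Real.sin (th L)) ^ 2 := by
  unfold lam
  linear_combination (-2) * Real.cos_two_mul (th L) + (-4) * Real.sin_sq_add_cos_sq (th L)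

lemma sin_th_pos (L : ℕ) : 0 < Real.sin (th L) := by
  apply Real.sin_pos_of_pos_of_lt_pi (th_pos L)
  rw [th]
  have h : (1:ℝ) < 4 * L + 2 := by
    have : (0:ℝ) ≤ (L:ℝ) := Nat.cast_nonneg L
    linarith
  calc Real.pi / (4 * (L:ℝ) + 2) < Real.pi / 1 := by
        apply div_lt_div_of_pos_left Real.pi_pos (by linarith) h
    _ = Real.pi := by ring

lemma lam_pos (L : ℕ) : 0 < lam L := by
  rw [lam_eq]
  have := sin_th_pos L
  positivity

def cc (L i : ℕ) : ℝ := (w L i - w L (i + 1)) / w L i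
def dd (L i : ℕ) : ℝ := (w L i - w L (i - 1)) / w L i

lemma combin (L : ℕ) (Y : ℕ → ℝ) (hY : Y L = 0) :
    ∑ i ∈ range L, (cc L i * Y i ^ 2 + dd L (i + 1) * Y (i + 1) ^ 2)
      = lam L * ∑ i ∈ range L, Y i ^ 2 := by
  rw [Finset.sum_add_distrib]
  have hdd0 : dd L 0 = 0 := by simp [dd]
  have h2 : ∑ i ∈ range L, dd L (i + 1) * Y (i + 1) ^ 2
      = ∑ i ∈ range L, dd L i * Y i ^ 2 := by
    have hs := Finset.sum_range_succ' (fun i => dd L i * Y i ^ 2) L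
    rw [Finset.sum_range_succ] at hs
    simp only [hY, hdd0] at hs
    simpa using hs.symm
  rw [h2, ← Finset.sum_add_distrib, Finset.mul_sum]
  apply Finset.sum_congr rfl
  intro i hi
  rw [Finset.mem_range] at hi
  have hw : w L i ≠ 0 := (w_pos hi).ne'
  have hcd : cc L i + dd L i = lam L := by
    unfold cc dd
    rw [← add_div]
    rw [show w L i - w L (i + 1) + (w L i - w L (i - 1))
        = lam L * w L i by linarith [eigen L i]]
    exact mul_div_cancel_right₀ (lam L) hw
  rw [← add_mul, hcd]

lemma main_ineq (L : ℕ) (Y : ℕ → ℝ) (hY : Y L = 0) :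
    lam L * ∑ i ∈ range L, Y i ^ 2 ≤ ∑ i ∈ range L, (Y i - Y (i + 1)) ^ 2 := by
  rw [← combin L Y hY]
  apply Finset.sum_le_sum
  intro i hi
  rw [Finset.mem_range] at hi
  have hp : 0 < w L i := w_pos hi
  have hdd : dd L (i + 1) = (w L (i + 1) - w L i) / w L (i + 1) := by
    unfold dd
    simp
  rcases lt_or_eq_of_le (Nat.succ_le_of_lt hi) with hi1 | hi1
  · have hq : 0 < w L (i + 1) := w_pos hi1
    rw [hdd]
    unfold cc
    set p := w L i
    set q := w L (i + 1)
    set a := Y i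
    set b := Y (i + 1)
    rw [div_mul_eq_mul_div, div_mul_eq_mul_div, div_add_div _ _ hp.ne' hq.ne',
      div_le_iff₀ (mul_pos hp hq)]
    nlinarith [sq_nonneg (q * a - p * b), mul_pos hp hq]
  · have hwi1 : w L (i + 1) = 0 := by rw [show i + 1 = L from hi1]; exact wL0 L
    have hYi1 : Y (i + 1) = 0 := by rw [show i + 1 = L from hi1]; exact hY
    rw [hdd, hwi1, hYi1]
    unfold cc
    rw [hwi1]
    simp [div_self hp.ne']

lemma ident (L : ℕ) :
    ∑ i ∈ range L, (w L i - w L (i + 1)) ^ 2 = lam L * ∑ i ∈ range L, (w L i) ^ 2 := by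
  rw [← combin L (w L) (wL0 L)]
  apply Finset.sum_congr rfl
  intro i hi
  rw [Finset.mem_range] at hi
  have hp : 0 < w L i := w_pos hi
  have hdd : dd L (i + 1) = (w L (i + 1) - w L i) / w L (i + 1) := by
    unfold dd; simp
  rcases lt_or_eq_of_le (Nat.succ_le_of_lt hi) with hi1 | hi1
  · have hq : 0 < w L (i + 1) := w_pos hi1
    rw [hdd]
    unfold cc
    field_simp
    ring
  · have hwi1 : w L (i + 1) = 0 := by rw [show i + 1 = L from hi1]; exact wL0 L
    rw [hdd, hwi1]
    unfold cc
    rw [hwi1]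
    simp [div_self hp.ne']


lemma normsq {L : ℕ} (z : EuclideanSpace ℝ (Fin L)) : ‖z‖ ^ 2 = ∑ i, (z i) ^ 2 := by
  rw [EuclideanSpace.norm_eq, Real.sq_sqrt (by positivity)]
  exact Finset.sum_congr rfl fun i _ => by rw [Real.norm_eq_abs, sq_abs]

lemma happly {L : ℕ} (x : EuclideanSpace ℝ (Fin L)) (i : Fin L) :
    LinearMap.toContinuousLinearMap (Matrix.toEuclideanLin (UL L)) x i
      = ∑ j, UL L i j * x j := by
  simp [Matrix.toEuclideanLin_apply, Matrix.mulVec, dotProduct]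

lemma filter_eq (L : ℕ) (i : ℕ) :
    (Finset.range L).filter (fun k => i ≤ k) = Finset.Ico i L := by
  ext k; simp [Finset.mem_Ico, and_comm]

lemma spec_eq (L : ℕ) (hL : 1 ≤ L) : specNorm (UL L) = 1 / (2 * Real.sin (th L)) := by
  have hs := sin_th_pos L
  have hlam := lam_pos L
  have hlam_eq := lam_eq L
  set c : ℝ := 1 / (2 * Real.sin (th L)) with hc
  have hc0 : 0 < c := by positivity
  have hc2 : c ^ 2 * lam L = 1 := by
    rw [hlam_eq, hc]; field_simp
  unfold specNorm
  set T := LinearMap.toContinuousLinearMap (Matrix.toEuclideanLin (UL L)) with hT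
  apply le_antisymm
  · apply ContinuousLinearMap.opNorm_le_bound _ hc0.le
    intro x
    set X : ℕ → ℝ := fun j => if h : j < L then x ⟨j, h⟩ else 0 with hX
    set Y : ℕ → ℝ := fun j => ∑ k ∈ Finset.Ico j L, X k with hYdef
    have hYL : Y L = 0 := by simp [hYdef]
    have hmul : ∀ i : Fin L, T x i = Y (i : ℕ) := by
      intro i
      rw [hT, happly]
      have hterm : ∀ j : Fin L, UL L i j * x j
          = (fun k => if (i:ℕ) ≤ k then X k else 0) (j:ℕ) := by
        intro j
        simp only [UL, Matrix.of_apply, hX]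
        rcases le_or_gt (i:ℕ) (j:ℕ) with h | h
        · rw [if_pos h, dif_pos j.isLt, if_pos (Fin.le_def.mpr h), one_mul, Fin.eta]
        · rw [if_neg (not_le.mpr h), if_neg (fun hle => absurd (Fin.le_def.mp hle) (not_le.mpr h)), zero_mul]
      rw [Finset.sum_congr rfl (fun j _ => hterm j),
        Fin.sum_univ_eq_sum_range (fun k => if (i:ℕ) ≤ k then X k else 0) L,
        ← Finset.sum_filter, filter_eq]
    have h1 : ‖T x‖ ^ 2 = ∑ i ∈ range L, Y i ^ 2 := by
      rw [normsq, ← Fin.sum_univ_eq_sum_range (fun k => Y k ^ 2) L]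
      exact Finset.sum_congr rfl fun i _ => by rw [hmul i]
    have h2 : ‖x‖ ^ 2 = ∑ i ∈ range L, X i ^ 2 := by
      rw [normsq, ← Fin.sum_univ_eq_sum_range (fun k => X k ^ 2) L]
      apply Finset.sum_congr rfl
      intro i _
      rw [hX]
      simp only [dif_pos i.isLt, Fin.eta]
    have h3 : ∑ i ∈ range L, X i ^ 2 = ∑ i ∈ range L, (Y i - Y (i+1)) ^ 2 := by
      apply Finset.sum_congr rfl
      intro i hi
      rw [Finset.mem_range] at hi
      have : Y i = X i + Y (i + 1) := by
        rw [hYdef]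
        simp only
        rw [Finset.sum_eq_sum_Ico_succ_bot hi]
      rw [this]; ring_nf
    have hmain := main_ineq L Y hYL
    rw [← h3] at hmain
    have hsq : ‖T x‖ ^ 2 ≤ (c * ‖x‖) ^ 2 := by
      rw [mul_pow, h1, h2]
      nlinarith [mul_le_mul_of_nonneg_left hmain (sq_nonneg c), hc2]
    have := Real.sqrt_le_sqrt hsq
    rwa [Real.sqrt_sq (norm_nonneg _), Real.sqrt_sq (by positivity)] at this
  · set x0 : EuclideanSpace ℝ (Fin L) :=
      (WithLp.equiv 2 (Fin L → ℝ)).symm (fun i : Fin L => w L i - w L ((i:ℕ) + 1)) with hx0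
    have hx0i : ∀ i : Fin L, x0 i = w L i - w L ((i:ℕ)+1) := fun i => rfl
    have hTx0 : ∀ i : Fin L, T x0 i = w L i := by
      intro i
      rw [hT, happly]
      have hterm : ∀ j : Fin L, UL L i j * x0 j
          = (fun k => if (i:ℕ) ≤ k then (w L k - w L (k+1)) else 0) (j:ℕ) := by
        intro j
        simp only [UL, Matrix.of_apply, hx0i]
        rcases le_or_gt (i:ℕ) (j:ℕ) with h | h
        · rw [if_pos h, if_pos (Fin.le_def.mpr h), one_mul]
        · rw [if_neg (not_le.mpr h), if_neg (fun hle => absurd (Fin.le_def.mp hle) (not_le.mpr h)), zero_mul]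
      rw [Finset.sum_congr rfl (fun j _ => hterm j),
        Fin.sum_univ_eq_sum_range (fun k => if (i:ℕ) ≤ k then (w L k - w L (k+1)) else 0) L,
        ← Finset.sum_filter, filter_eq, Finset.sum_Ico_eq_sum_range]
      have htel := Finset.sum_range_sub' (f := fun t => w L ((i:ℕ) + t)) (n := L - (i:ℕ))
      have harg : ∀ t, w L ((i:ℕ) + t) - w L ((i:ℕ) + t + 1)
          = w L ((i:ℕ) + t) - w L ((i:ℕ) + (t + 1)) := by
        intro t; rw [Nat.add_assoc]
      rw [Finset.sum_congr rfl (fun t _ => harg t), htel,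
        Nat.add_sub_cancel' (le_of_lt i.isLt), wL0, Nat.add_zero, sub_zero]
    have hS : 0 < ∑ i ∈ range L, (w L i) ^ 2 := by
      apply Finset.sum_pos
      · intro i hi; rw [Finset.mem_range] at hi; exact pow_pos (w_pos hi) 2
      · exact Finset.nonempty_range_iff.mpr (by omega)
    have hn1 : ‖T x0‖ ^ 2 = ∑ i ∈ range L, (w L i) ^ 2 := by
      rw [normsq, ← Fin.sum_univ_eq_sum_range (fun k => (w L k) ^ 2) L]
      exact Finset.sum_congr rfl fun i _ => by rw [hTx0 i]
    have hn2 : ‖x0‖ ^ 2 = lam L * ∑ i ∈ range L, (w L i) ^ 2 := by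
      rw [normsq, ← ident L, ← Fin.sum_univ_eq_sum_range (fun k => (w L k - w L (k+1)) ^ 2) L]
      exact Finset.sum_congr rfl fun i _ => by rw [hx0i i]
    have hop := T.le_opNorm x0
    have hTn : 0 ≤ ‖T‖ := norm_nonneg T
    have h5 : ‖T x0‖ ^ 2 ≤ ‖T‖ ^ 2 * ‖x0‖ ^ 2 := by
      nlinarith [hop, norm_nonneg (T x0), norm_nonneg x0, hTn]
    rw [hn1, hn2] at h5
    have hTlam : 1 ≤ ‖T‖ ^ 2 * lam L := by
      by_contra h
      push_neg at h
      nlinarith [hS, h5]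
    have h6 : c ^ 2 ≤ ‖T‖ ^ 2 := by nlinarith [hTlam, hc2, hlam]
    have := Real.sqrt_le_sqrt h6
    rwa [Real.sqrt_sq hc0.le, Real.sqrt_sq hTn] at this


lemma log3_bounds : (1.0926:ℝ) ≤ Real.log 3 ∧ Real.log 3 ≤ 1.1363 := by
  have h4 : Real.log 4 = 2 * Real.log 2 := by
    rw [show (4:ℝ) = 2^2 by norm_num, Real.log_pow]; push_cast; ring
  have h43 : Real.log (4/3) = Real.log 4 - Real.log 3 :=
    Real.log_div (by norm_num) (by norm_num)
  have hup : Real.log (4/3 : ℝ) ≤ 0.2936 := by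
    have h1 : Real.log (4/3 : ℝ) ≤ Real.log ((1.0367:ℝ)^8) := by
      rw [Real.log_le_log_iff (by norm_num) (by positivity)]
      norm_num
    rw [Real.log_pow] at h1
    have h2 : Real.log (1.0367:ℝ) ≤ 1.0367 - 1 := by
      have := Real.log_le_sub_one_of_pos (x := (1.0367:ℝ)) (by norm_num)
      linarith
    push_cast at h1
    linarith
  have hlow : (1/4:ℝ) ≤ Real.log (4/3) := by
    have h1 := Real.log_le_sub_one_of_pos (x := (3/4:ℝ)) (by norm_num)
    have hinv : Real.log (3/4:ℝ) = - Real.log (4/3) := by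
      rw [← Real.log_inv]; norm_num
    linarith
  have hl2g := Real.log_two_gt_d9
  have hl2l := Real.log_two_lt_d9
  constructor <;> nlinarith [h4, h43, hup, hlow, hl2g, hl2l]

lemma hstar (L : ℕ) (hL3 : 3 ≤ L) :
    Real.pi ^ 2 * (2 * (L:ℝ) + Real.log L) ≤ 16 * (2*(L:ℝ)+1)^2 * (Real.log L - 1) := by
  have hπ := Real.pi_pos
  have hπlt := Real.pi_lt_d4
  have hπ2 : Real.pi ^ 2 ≤ 9.8697 := by nlinarith
  rcases eq_or_lt_of_le hL3 with h3 | h4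
  · -- L = 3
    have hL : (L:ℝ) = 3 := by exact_mod_cast h3.symm
    rw [hL]
    obtain ⟨hl, hu⟩ := log3_bounds
    nlinarith [hl, hu, hπ2, hπ]
  · -- 4 ≤ L
    have hL4 : (4:ℝ) ≤ (L:ℝ) := by exact_mod_cast h4
    have hlog4 : Real.log 4 ≤ Real.log L := by
      rw [Real.log_le_log_iff (by norm_num) (by linarith)]
      linarith
    have h4e : Real.log 4 = 2 * Real.log 2 := by
      rw [show (4:ℝ) = 2^2 by norm_num, Real.log_pow]; push_cast; ring
    have hl2g := Real.log_two_gt_d9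
    have hlogL : Real.log L ≤ (L:ℝ) - 1 := Real.log_le_sub_one_of_pos (by linarith)
    have hlb : (0.386:ℝ) ≤ Real.log L - 1 := by linarith
    nlinarith [hπ2, hlb, hlogL, hL4, sq_nonneg ((L:ℝ) - 4)]

lemma part2 (L : ℕ) (hL3 : 3 ≤ L) :
    1 / (2 * Real.sin (th L)) ≤ (2 * L + Real.log L) / Real.pi := by
  have hπ := Real.pi_pos
  have hL' : (3:ℝ) ≤ L := by exact_mod_cast hL3
  have hθ : 0 < th L := th_pos L
  have hθ1 : th L ≤ 1 := by
    rw [th, div_le_one (by positivity)]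
    linarith [Real.pi_lt_d4]
  have hsin := Real.sin_gt_sub_cube hθ
  have hlog1 : 1 ≤ Real.log L := by
    rw [Real.le_log_iff_exp_le (by positivity)]
    linarith [Real.exp_one_lt_d9]
  set s : ℝ := 2 * L + Real.log L with hsdef
  have hs : 0 < s := by rw [hsdef]; linarith
  have hsinpos := sin_th_pos L
  rw [div_le_div_iff₀ (by positivity) hπ]
  have hst := hstar L hL3
  have hpoly : (4*(L:ℝ)+2)^3 ≤ s * (2*(4*(L:ℝ)+2)^2) - s * Real.pi^2 / 2 := by
    nlinarith [hst]
  have h3 : Real.pi ≤ s * (2 * (th L - th L ^ 3 / 4)) := by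
    rw [th]
    rw [show s * (2 * (Real.pi/(4*(L:ℝ)+2) - (Real.pi/(4*(L:ℝ)+2))^3/4))
        = (s * (2 * Real.pi * (4*(L:ℝ)+2)^2 - Real.pi^3/2)) / (4*(L:ℝ)+2)^3 by
      field_simp; ring]
    rw [le_div_iff₀ (by positivity)]
    nlinarith [mul_le_mul_of_nonneg_left hpoly hπ.le]
  have h2 : s * (2 * (th L - th L ^ 3 / 4)) ≤ s * (2 * Real.sin (th L)) := by
    apply mul_le_mul_of_nonneg_left _ hs.le
    linarith [hsin, pow_pos hθ 3]
  calc 1 * Real.pi = Real.pi := one_mul _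
    _ ≤ s * (2 * (th L - th L ^ 3 / 4)) := h3
    _ ≤ s * (2 * Real.sin (th L)) := h2


end Stmt11Aux

/-- Spectral norm of the all-ones upper-triangular matrix. -/
theorem stmt11 {L : ℕ} (hL : 1 ≤ L) :
    specNorm (UL L) = 1 / (2 * Real.sin (Real.pi / (4 * L + 2))) ∧
    (3 ≤ L → specNorm (UL L) ≤ (2 * L + Real.log L) / Real.pi) := by
  constructor
  · exact Stmt11Aux.spec_eq L hL
  · intro h3
    rw [Stmt11Aux.spec_eq L hL]
    exact Stmt11Aux.part2 L h3

end
end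

section
/- (High-probability bound on the averaged-noise Hankel matrix.) Let n, N ≥ 1, T ≥ L ≥ 1, σ > 0, δ ∈ (0,1), and let w(0),…,w(T−1) ∈ ℝ^n be random vectors whose nT scalar coordinates are independent and identically distributed N(0, σ²/N). Then with probability at least 1 − δ, ‖𝓗_L(w)‖₂ ≤ √( (2 σ² n T / N) · log(2nT/δ) ). -/
open Matrix

noncomputable section

open MeasureTheory ProbabilityTheory Finset Filter Complex
open scoped NNReal ENNReal

noncomputable def omg (T : ℕ) : ℂ := Complex.exp (2 * Real.pi * Complex.I / T)

lemma omg_prim {T : ℕ} (hT : T ≠ 0) : IsPrimitiveRoot (omg T) T :=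
  Complex.isPrimitiveRoot_exp T hT

lemma omg_pow_eq (T k : ℕ) : omg T ^ k = Complex.exp (((2 * Real.pi * k / T : ℝ)) * Complex.I) := by
  rw [omg, ← Complex.exp_nat_mul]; congr 1; push_cast; ring

lemma omg_ne_zero (T k : ℕ) : omg T ^ k ≠ 0 := by
  rw [omg_pow_eq]; exact Complex.exp_ne_zero _

lemma geo_sum {z : ℂ} (T : ℕ) (hz1 : z ≠ 1) (hzT : z ^ T = 1) :
    ∑ t ∈ Finset.range T, z ^ t = 0 := by
  rw [geom_sum_eq hz1, hzT]; simp
/-- key orthogonality sum -/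
lemma omg_orth {T : ℕ} (hT : T ≠ 0) (t t' : Fin T) :
    ∑ j : Fin T, omg T ^ ((j : ℕ) * t) * (omg T ^ ((j : ℕ) * t'))⁻¹
      = if t = t' then (T : ℂ) else 0 := by
  have hz : ∀ j : ℕ, omg T ^ (j * (t:ℕ)) * (omg T ^ (j * (t':ℕ)))⁻¹
      = (omg T ^ (t:ℕ) * (omg T ^ (t':ℕ))⁻¹) ^ j := by
    intro j
    rw [mul_comm j (t:ℕ), mul_comm j (t':ℕ), pow_mul, pow_mul, ← inv_pow, ← mul_pow]
  simp only [hz]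
  rw [Fin.sum_univ_eq_sum_range]
  set z := omg T ^ (t:ℕ) * (omg T ^ (t':ℕ))⁻¹ with hzdef
  by_cases h : t = t'
  · subst h
    simp [hzdef, mul_inv_cancel₀ (omg_ne_zero T t)]
  · rw [if_neg h]
    refine geo_sum T ?_ ?_
    · intro hz1
      apply h
      have : omg T ^ (t:ℕ) = omg T ^ (t':ℕ) := by
        rw [hzdef, mul_inv_eq_one₀ (omg_ne_zero T (t':ℕ))] at hz1
        exact hz1
      exact Fin.ext ((omg_prim hT).pow_inj t.isLt t'.isLt this)
    · have h1 : ∀ s : ℕ, (omg T ^ s) ^ T = 1 := fun s => by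
        rw [← pow_mul, mul_comm, pow_mul, (omg_prim hT).pow_eq_one, one_pow]
      rw [hzdef, mul_pow, inv_pow, h1, h1, inv_one, mul_one]

/-- Parseval for the (unnormalized) DFT. -/
lemma parseval {T : ℕ} (hT : T ≠ 0) (y : Fin T → ℂ) :
    ∑ j : Fin T, Complex.normSq (∑ t : Fin T, y t * omg T ^ ((j : ℕ) * t)) =
      T * ∑ t : Fin T, Complex.normSq (y t) := by
  have key : ∑ j : Fin T, (∑ t : Fin T, y t * omg T ^ ((j : ℕ) * t)) *
      (starRingEnd ℂ) (∑ t : Fin T, y t * omg T ^ ((j : ℕ) * t))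
      = (T : ℂ) * ∑ t : Fin T, y t * (starRingEnd ℂ) (y t) := by
    have conj_omg : ∀ j t : ℕ, (starRingEnd ℂ) (omg T ^ (j * t)) = (omg T ^ (j * t))⁻¹ := by
      intro j t
      rw [omg_pow_eq, ← Complex.exp_conj, ← Complex.exp_neg]
      congr 1
      rw [_root_.map_mul, Complex.conj_ofReal, Complex.conj_I]
      ring
    calc ∑ j : Fin T, (∑ t : Fin T, y t * omg T ^ ((j : ℕ) * t)) *
        (starRingEnd ℂ) (∑ t : Fin T, y t * omg T ^ ((j : ℕ) * t))
        = ∑ j : Fin T, ∑ t : Fin T, ∑ t' : Fin T,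
            (y t * (starRingEnd ℂ) (y t')) * (omg T ^ ((j:ℕ) * t) * (omg T ^ ((j:ℕ) * t'))⁻¹) := by
          refine Finset.sum_congr rfl fun j _ => ?_
          rw [_root_.map_sum, Finset.sum_mul_sum]
          refine Finset.sum_congr rfl fun t _ => Finset.sum_congr rfl fun t' _ => ?_
          rw [_root_.map_mul, conj_omg]
          ring
      _ = ∑ t : Fin T, ∑ t' : Fin T,
            (y t * (starRingEnd ℂ) (y t')) * ∑ j : Fin T, (omg T ^ ((j:ℕ) * t) * (omg T ^ ((j:ℕ) * t'))⁻¹) := by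
          rw [Finset.sum_comm]
          refine Finset.sum_congr rfl fun t _ => ?_
          rw [Finset.sum_comm]
          refine Finset.sum_congr rfl fun t' _ => ?_
          rw [Finset.mul_sum]
      _ = ∑ t : Fin T, ∑ t' : Fin T,
            (y t * (starRingEnd ℂ) (y t')) * (if t = t' then (T:ℂ) else 0) := by
          refine Finset.sum_congr rfl fun t _ => Finset.sum_congr rfl fun t' _ => ?_
          rw [omg_orth hT]
      _ = (T : ℂ) * ∑ t : Fin T, y t * (starRingEnd ℂ) (y t) := by
          rw [Finset.mul_sum]
          refine Finset.sum_congr rfl fun t _ => ?_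
          simp only [mul_ite, mul_zero]
          rw [Finset.sum_ite_eq]
          simp [mul_comm]
  have : ((∑ j : Fin T, Complex.normSq (∑ t : Fin T, y t * omg T ^ ((j : ℕ) * t)) : ℝ) : ℂ)
      = ((T * ∑ t : Fin T, Complex.normSq (y t) : ℝ) : ℂ) := by
    push_cast
    simp only [← Complex.mul_conj]
    exact key
  exact_mod_cast this

lemma omg_pow_mod {T : ℕ} (hT : T ≠ 0) (a : ℕ) : omg T ^ a = omg T ^ (a % T) := by
  conv_lhs => rw [← Nat.div_add_mod a T]
  rw [pow_add, pow_mul, (omg_prim hT).pow_eq_one, one_pow, one_mul]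

lemma omg_add {m : ℕ} (j t t' : Fin (m+1)) :
    omg (m+1) ^ ((j:ℕ) * ((t + t' : Fin (m+1)) : ℕ))
      = omg (m+1) ^ ((j:ℕ) * ((t:ℕ) + (t':ℕ))) := by
  have hT : m + 1 ≠ 0 := Nat.succ_ne_zero m
  rw [omg_pow_mod hT ((j:ℕ) * ((t + t' : Fin (m+1)) : ℕ)),
    omg_pow_mod hT ((j:ℕ) * ((t:ℕ) + (t':ℕ)))]
  congr 1
  rw [Nat.mul_mod, Nat.mul_mod (j:ℕ) ((t:ℕ) + (t':ℕ)), Fin.val_add,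
    Nat.mod_mod_of_dvd _ dvd_rfl]

lemma circ_shift {m : ℕ} (c : Fin (m+1) → ℝ) (j : Fin (m+1)) (t' : Fin (m+1)) :
    ∑ t : Fin (m+1), ((c (t + t') : ℂ)) * omg (m+1) ^ ((j:ℕ) * t)
      = (∑ s : Fin (m+1), (c s : ℂ) * omg (m+1) ^ ((j:ℕ) * s)) * (omg (m+1) ^ ((j:ℕ) * t'))⁻¹ := by
  rw [eq_mul_inv_iff_mul_eq₀ (omg_ne_zero _ _), Finset.sum_mul]
  have key : ∀ t : Fin (m+1), (c (t + t') : ℂ) * omg (m+1) ^ ((j:ℕ) * t) * omg (m+1) ^ ((j:ℕ) * t')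
      = (fun s : Fin (m+1) => (c s : ℂ) * omg (m+1) ^ ((j:ℕ) * s)) (t + t') := by
    intro t
    simp only
    rw [mul_assoc, ← pow_add, ← Nat.mul_add, omg_add]
  rw [Finset.sum_congr rfl fun t _ => key t]
  have := Equiv.sum_comp (Equiv.addRight t')
    (fun s : Fin (m+1) => (c s : ℂ) * omg (m+1) ^ ((j:ℕ) * s))
  simpa using this

lemma circ_bound {m : ℕ} (c : Fin (m+1) → ℝ) {s : ℝ}
    (h : ∀ j : Fin (m+1),
      Complex.normSq (∑ t : Fin (m+1), (c t : ℂ) * omg (m+1) ^ ((j:ℕ) * t)) ≤ s^2)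
    (u : Fin (m+1) → ℝ) :
    ∑ t : Fin (m+1), (∑ t' : Fin (m+1), c (t + t') * u t')^2
      ≤ s^2 * ∑ t' : Fin (m+1), (u t')^2 := by
  have hT : m + 1 ≠ 0 := Nat.succ_ne_zero m
  set V : Fin (m+1) → ℂ := fun t => ((∑ t' : Fin (m+1), c (t + t') * u t' : ℝ) : ℂ) with hV
  have hnormV : ∀ t, Complex.normSq (V t) = (∑ t' : Fin (m+1), c (t + t') * u t')^2 := by
    intro t; rw [hV]; rw [Complex.normSq_ofReal]; ring
  have hG : ∀ j : Fin (m+1), (∑ t : Fin (m+1), V t * omg (m+1) ^ ((j:ℕ) * t))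
      = (∑ s : Fin (m+1), (c s : ℂ) * omg (m+1) ^ ((j:ℕ) * s))
        * (∑ t' : Fin (m+1), (u t' : ℂ) * (omg (m+1) ^ ((j:ℕ) * t'))⁻¹) := by
    intro j
    have hst : ∀ t : Fin (m+1), V t * omg (m+1) ^ ((j:ℕ) * t)
        = ∑ t' : Fin (m+1), ((c (t + t') : ℂ) * omg (m+1) ^ ((j:ℕ) * t)) * (u t' : ℂ) := by
      intro t
      rw [hV]
      push_cast
      rw [Finset.sum_mul]
      exact Finset.sum_congr rfl fun t' _ => by ring
    calc (∑ t : Fin (m+1), V t * omg (m+1) ^ ((j:ℕ) * t))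
        = ∑ t : Fin (m+1), ∑ t' : Fin (m+1),
            ((c (t + t') : ℂ) * omg (m+1) ^ ((j:ℕ) * t)) * (u t' : ℂ) :=
          Finset.sum_congr rfl fun t _ => hst t
      _ = ∑ t' : Fin (m+1), (∑ t : Fin (m+1),
            (c (t + t') : ℂ) * omg (m+1) ^ ((j:ℕ) * t)) * (u t' : ℂ) := by
          rw [Finset.sum_comm]
          exact Finset.sum_congr rfl fun t' _ => (Finset.sum_mul _ _ _).symm
      _ = ∑ t' : Fin (m+1), ((∑ s : Fin (m+1), (c s : ℂ) * omg (m+1) ^ ((j:ℕ) * s))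
            * (omg (m+1) ^ ((j:ℕ) * t'))⁻¹) * (u t' : ℂ) :=
          Finset.sum_congr rfl fun t' _ => by rw [circ_shift]
      _ = _ := by
          rw [Finset.mul_sum]
          exact Finset.sum_congr rfl fun t' _ => by ring
  have hH : ∑ j : Fin (m+1),
      Complex.normSq (∑ t' : Fin (m+1), (u t' : ℂ) * (omg (m+1) ^ ((j:ℕ) * t'))⁻¹)
      = ((m+1 : ℕ) : ℝ) * ∑ t' : Fin (m+1), (u t')^2 := by
    have hconj : ∀ j : Fin (m+1), (∑ t' : Fin (m+1), (u t' : ℂ) * (omg (m+1) ^ ((j:ℕ) * t'))⁻¹)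
        = (starRingEnd ℂ) (∑ t' : Fin (m+1), (u t' : ℂ) * omg (m+1) ^ ((j:ℕ) * t')) := by
      intro j
      rw [_root_.map_sum]
      refine Finset.sum_congr rfl fun t' _ => ?_
      rw [_root_.map_mul, Complex.conj_ofReal]
      congr 1
      rw [omg_pow_eq, ← Complex.exp_conj, ← Complex.exp_neg]
      congr 1
      rw [_root_.map_mul, Complex.conj_ofReal, Complex.conj_I]
      ring
    calc ∑ j : Fin (m+1),
        Complex.normSq (∑ t' : Fin (m+1), (u t' : ℂ) * (omg (m+1) ^ ((j:ℕ) * t'))⁻¹)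
        = ∑ j : Fin (m+1),
            Complex.normSq (∑ t' : Fin (m+1), (u t' : ℂ) * omg (m+1) ^ ((j:ℕ) * t')) := by
          refine Finset.sum_congr rfl fun j _ => ?_
          rw [hconj, Complex.normSq_conj]
      _ = ((m+1 : ℕ) : ℝ) * ∑ t' : Fin (m+1), Complex.normSq ((u t' : ℂ)) := parseval hT _
      _ = ((m+1 : ℕ) : ℝ) * ∑ t' : Fin (m+1), (u t')^2 := by
          congr 1
          exact Finset.sum_congr rfl fun t' _ => by rw [Complex.normSq_ofReal]; ring
  have main : ((m+1 : ℕ) : ℝ) * ∑ t : Fin (m+1), (∑ t' : Fin (m+1), c (t + t') * u t')^2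
      ≤ ((m+1 : ℕ) : ℝ) * (s^2 * ∑ t' : Fin (m+1), (u t')^2) := by
    calc ((m+1 : ℕ) : ℝ) * ∑ t : Fin (m+1), (∑ t' : Fin (m+1), c (t + t') * u t')^2
        = ((m+1 : ℕ) : ℝ) * ∑ t : Fin (m+1), Complex.normSq (V t) := by
          congr 1; exact (Finset.sum_congr rfl fun t _ => (hnormV t).symm)
      _ = ∑ j : Fin (m+1), Complex.normSq (∑ t : Fin (m+1), V t * omg (m+1) ^ ((j:ℕ) * t)) :=
          (parseval hT V).symm
      _ ≤ ∑ j : Fin (m+1), s^2 *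
            Complex.normSq (∑ t' : Fin (m+1), (u t' : ℂ) * (omg (m+1) ^ ((j:ℕ) * t'))⁻¹) := by
          refine Finset.sum_le_sum fun j _ => ?_
          rw [hG j, Complex.normSq_mul]
          exact mul_le_mul_of_nonneg_right (h j) (Complex.normSq_nonneg _)
      _ = s^2 * (((m+1 : ℕ) : ℝ) * ∑ t' : Fin (m+1), (u t')^2) := by rw [← Finset.mul_sum, hH]
      _ = ((m+1 : ℕ) : ℝ) * (s^2 * ∑ t' : Fin (m+1), (u t')^2) := by ring
  have hTpos : (0:ℝ) < ((m+1 : ℕ) : ℝ) := by positivity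
  exact le_of_mul_le_mul_left main hTpos

/-- real and imaginary parts of Fourier sums of a real signal -/
lemma cfour_re (T : ℕ) (c : Fin T → ℝ) (k : ℕ) :
    (∑ t : Fin T, (c t : ℂ) * omg T ^ (k * (t:ℕ))).re
      = ∑ t : Fin T, c t * Real.cos (2 * Real.pi * ((k * (t:ℕ) : ℕ) : ℝ) / (T:ℝ)) := by
  have hre : ∀ (r θ : ℝ), ((r:ℂ) * Complex.exp ((θ:ℝ) * Complex.I)).re = r * Real.cos θ := by
    intro r θ
    rw [Complex.mul_re, Complex.ofReal_re, Complex.ofReal_im, Complex.exp_ofReal_mul_I_re,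
      Complex.exp_ofReal_mul_I_im]
    ring
  rw [Complex.re_sum]
  refine Finset.sum_congr rfl fun t _ => ?_
  rw [omg_pow_eq]
  exact hre (c t) _

lemma cfour_im (T : ℕ) (c : Fin T → ℝ) (k : ℕ) :
    (∑ t : Fin T, (c t : ℂ) * omg T ^ (k * (t:ℕ))).im
      = ∑ t : Fin T, c t * Real.sin (2 * Real.pi * ((k * (t:ℕ) : ℕ) : ℝ) / (T:ℝ)) := by
  have him : ∀ (r θ : ℝ), ((r:ℂ) * Complex.exp ((θ:ℝ) * Complex.I)).im = r * Real.sin θ := by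
    intro r θ
    rw [Complex.mul_im, Complex.ofReal_re, Complex.ofReal_im, Complex.exp_ofReal_mul_I_re,
      Complex.exp_ofReal_mul_I_im]
    ring
  rw [Complex.im_sum]
  refine Finset.sum_congr rfl fun t _ => ?_
  rw [omg_pow_eq]
  exact him (c t) _

/-- geometric sum of omg powers vanishes when `T ∤ k` -/
lemma omg_geo_sum {T k : ℕ} (hT : T ≠ 0) (hk : ¬ (T ∣ k)) :
    ∑ t : Fin T, omg T ^ (k * (t:ℕ)) = 0 := by
  have h1 : ∀ t : Fin T, omg T ^ (k * (t:ℕ)) = (omg T ^ k) ^ (t:ℕ) := fun t => by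
    rw [← pow_mul]
  rw [Finset.sum_congr rfl fun t _ => h1 t, Fin.sum_univ_eq_sum_range]
  refine geo_sum T ?_ ?_
  · rw [Ne, (omg_prim hT).pow_eq_one_iff_dvd]
    exact hk
  · rw [← pow_mul, mul_comm, pow_mul, (omg_prim hT).pow_eq_one, one_pow]

lemma cos_sq_sum_le (T : ℕ) (k : ℕ) :
    ∑ t : Fin T, Real.cos (2 * Real.pi * ((k * (t:ℕ) : ℕ) : ℝ) / (T:ℝ)) ^ 2 ≤ (T:ℝ) := by
  calc ∑ t : Fin T, Real.cos (2 * Real.pi * ((k * (t:ℕ) : ℕ) : ℝ) / (T:ℝ)) ^ 2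
      ≤ ∑ _t : Fin T, (1:ℝ) := Finset.sum_le_sum fun t _ =>
        (sq_le_one_iff_abs_le_one _).2 (Real.abs_cos_le_one _)
    _ = (T:ℝ) := by simp

lemma cos_sq_sum_eq {T k : ℕ} (hT : T ≠ 0) (hk : ¬ (T ∣ 2*k)) :
    ∑ t : Fin T, Real.cos (2 * Real.pi * ((k * (t:ℕ) : ℕ) : ℝ) / (T:ℝ)) ^ 2 = (T:ℝ)/2 := by
  have hgeo : ∑ t : Fin T, Real.cos (2 * Real.pi * (((2*k) * (t:ℕ) : ℕ) : ℝ) / (T:ℝ)) = 0 := by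
    have h0 := omg_geo_sum hT hk
    have h2 := congrArg Complex.re h0
    rw [Complex.re_sum, Complex.zero_re] at h2
    rw [← h2]
    refine Finset.sum_congr rfl fun t _ => ?_
    rw [omg_pow_eq, Complex.exp_ofReal_mul_I_re]
  have hdouble : ∀ t : Fin T,
      Real.cos (2 * Real.pi * ((k * (t:ℕ) : ℕ) : ℝ) / (T:ℝ)) ^ 2
        = 1/2 + Real.cos (2 * Real.pi * (((2*k) * (t:ℕ) : ℕ) : ℝ) / (T:ℝ)) / 2 := by
    intro t
    rw [Real.cos_sq]
    congr 2
    push_cast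
    ring
  rw [Finset.sum_congr rfl fun t _ => hdouble t, Finset.sum_add_distrib,
    ← Finset.sum_div, ← Finset.sum_div, hgeo, Finset.sum_const, Finset.card_univ, Fintype.card_fin,
    nsmul_eq_mul]
  ring

lemma sin_sq_sum_eq {T k : ℕ} (hT : T ≠ 0) (hk : ¬ (T ∣ 2*k)) :
    ∑ t : Fin T, Real.sin (2 * Real.pi * ((k * (t:ℕ) : ℕ) : ℝ) / (T:ℝ)) ^ 2 = (T:ℝ)/2 := by
  have h1 : ∀ t : Fin T, Real.sin (2 * Real.pi * ((k * (t:ℕ) : ℕ) : ℝ) / (T:ℝ)) ^ 2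
      = 1 - Real.cos (2 * Real.pi * ((k * (t:ℕ) : ℕ) : ℝ) / (T:ℝ)) ^ 2 := by
    intro t
    rw [Real.sin_sq]
  rw [Finset.sum_congr rfl fun t _ => h1 t, Finset.sum_sub_distrib, cos_sq_sum_eq hT hk,
    Finset.sum_const, Finset.card_univ, Fintype.card_fin, nsmul_eq_mul]
  ring

lemma sin_heavy_zero {T k : ℕ} (hT : T ≠ 0) (hk : T ∣ 2*k) (hk2 : k ≤ T/2) (t : Fin T) :
    Real.sin (2 * Real.pi * ((k * (t:ℕ) : ℕ) : ℝ) / (T:ℝ)) = 0 := by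
  have h2kT : 2*k ≤ T := by omega
  have hcases : k = 0 ∨ 2*k = T := by
    rcases hk with ⟨c, hc⟩
    have hcle : c ≤ 1 := by
      by_contra hcge
      have h2 : T*2 ≤ T*c := Nat.mul_le_mul_left T (by omega)
      omega
    interval_cases c
    · omega
    · omega
  rcases hcases with h | h
  · subst h
    simp
  · have hk0 : k ≠ 0 := by omega
    have harg : 2 * Real.pi * ((k * (t:ℕ) : ℕ) : ℝ) / (T:ℝ) = ((t:ℕ) : ℝ) * Real.pi := by
      have hTr : ((T:ℕ) : ℝ) = 2*(k:ℝ) := by exact_mod_cast h.symm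
      rw [hTr]
      have : (k:ℝ) ≠ 0 := Nat.cast_ne_zero.2 hk0
      push_cast
      field_simp
    rw [harg, Real.sin_nat_mul_pi]

lemma cfour_conj {T : ℕ} (hT : T ≠ 0) (c : Fin T → ℝ) {k : ℕ} (hk : k ≤ T) :
    ∑ t : Fin T, (c t : ℂ) * omg T ^ ((T - k) * (t:ℕ))
      = (starRingEnd ℂ) (∑ t : Fin T, (c t : ℂ) * omg T ^ (k * (t:ℕ))) := by
  rw [_root_.map_sum]
  refine Finset.sum_congr rfl fun t _ => ?_
  rw [_root_.map_mul, Complex.conj_ofReal]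
  congr 1
  have habs : ‖omg T ^ (k * (t:ℕ))‖ = 1 := by
    rw [omg_pow_eq, Complex.norm_exp_ofReal_mul_I]
  have hmul : omg T ^ ((T-k) * (t:ℕ)) * omg T ^ (k * (t:ℕ)) = 1 := by
    rw [← pow_add, ← Nat.add_mul, Nat.sub_add_cancel hk, pow_mul,
      (omg_prim hT).pow_eq_one, one_pow]
  have h1 : omg T ^ ((T-k)*(t:ℕ)) = (omg T ^ (k*(t:ℕ)))⁻¹ := eq_inv_of_mul_eq_one_left hmul
  have h2 : (omg T ^ (k*(t:ℕ)))⁻¹ = (starRingEnd ℂ) (omg T ^ (k*(t:ℕ))) := by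
    refine inv_eq_of_mul_eq_one_right ?_
    rw [Complex.mul_conj]
    rw [show Complex.normSq (omg T ^ (k*(t:ℕ))) = 1 by
      rw [← Complex.sq_norm, habs]; norm_num]
    norm_num
  rw [h1, h2]

lemma pad_sum {M K : ℕ} (hK : K ≤ M) (f : Fin M → ℝ)
    (hf : ∀ t : Fin M, ¬ ((t:ℕ) < K) → f t = 0) :
    ∑ t : Fin M, f t = ∑ j : Fin K, f (Fin.castLE hK j) := by
  classical
  calc ∑ t : Fin M, f t = ∑ t ∈ Finset.univ.map (Fin.castLEEmb hK), f t := by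
        refine (Finset.sum_subset (Finset.subset_univ _) ?_).symm
        intro x _ hx
        refine hf x fun hlt => hx ?_
        refine Finset.mem_map.2 ⟨⟨(x:ℕ), hlt⟩, Finset.mem_univ _, ?_⟩
        simp [Fin.castLEEmb, Fin.castLE]
    _ = ∑ j : Fin K, f (Fin.castLE hK j) := by
        rw [Finset.sum_map]
        rfl

lemma spec_bound {n m L : ℕ} (hL : 1 ≤ L) (hLT : L ≤ m+1) (wv : Fin (m+1) → Fin n → ℝ)
    {s : ℝ} (hs : 0 ≤ s)
    (h : ∀ a : Fin n, ∀ j : Fin (m+1),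
      Complex.normSq (∑ t : Fin (m+1), (wv t a : ℂ) * omg (m+1) ^ ((j:ℕ) * t)) ≤ s^2) :
    specNorm (hankelMat L wv) ≤ Real.sqrt (n * s^2) := by
  classical
  have hKle : m+1-L+1 ≤ m+1 := by omega
  refine ContinuousLinearMap.opNorm_le_bound _ (Real.sqrt_nonneg _) fun x => ?_
  have hx : ∀ i, (Matrix.toEuclideanLin (hankelMat L wv)).toContinuousLinearMap x i
      = ∑ j : Fin (m+1-L+1), hankelMat L wv i j * x j := by
    intro i
    simp [Matrix.toEuclideanLin_apply, Matrix.mulVec, dotProduct]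
  have hnorm1 : ‖(Matrix.toEuclideanLin (hankelMat L wv)).toContinuousLinearMap x‖
      = Real.sqrt (∑ p : Fin L × Fin n, (∑ j, hankelMat L wv p j * x j)^2) := by
    rw [EuclideanSpace.norm_eq]
    congr 1
    refine Finset.sum_congr rfl fun p _ => ?_
    rw [hx p, Real.norm_eq_abs, _root_.sq_abs]
  have hnormx : ‖x‖ = Real.sqrt (∑ j : Fin (m+1-L+1), (x j)^2) := by
    rw [EuclideanSpace.norm_eq]
    congr 1
    exact Finset.sum_congr rfl fun j _ => by rw [Real.norm_eq_abs, _root_.sq_abs]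
  set xt : Fin (m+1) → ℝ := fun t' => if h2 : (t':ℕ) < m+1-L+1 then x ⟨(t':ℕ), h2⟩ else 0 with hxt
  have hxt0 : ∀ t' : Fin (m+1), ¬((t':ℕ) < m+1-L+1) → xt t' = 0 := fun t' h' => dif_neg h'
  have hxtc : ∀ j : Fin (m+1-L+1), xt (Fin.castLE hKle j) = x j := by
    intro j
    rw [hxt]
    simp only [Fin.castLE]
    rw [dif_pos j.isLt]
  have hxx : ∑ t' : Fin (m+1), (xt t')^2 = ∑ j : Fin (m+1-L+1), (x j)^2 := by
    rw [pad_sum hKle (fun t' => (xt t')^2) (fun t' h' => by rw [hxt0 t' h']; ring)]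
    exact Finset.sum_congr rfl fun j _ => by rw [hxtc j]
  have key : ∑ p : Fin L × Fin n, (∑ j, hankelMat L wv p j * x j)^2
      ≤ (n * s^2) * ∑ j : Fin (m+1-L+1), (x j)^2 := by
    rw [Fintype.sum_prod_type]
    have hper : ∀ a : Fin n, ∑ i : Fin L, (∑ j, hankelMat L wv (i, a) j * x j)^2
        ≤ s^2 * ∑ j : Fin (m+1-L+1), (x j)^2 := by
      intro a
      have hEq : ∀ i : Fin L, (∑ j, hankelMat L wv (i,a) j * x j)
          = ∑ t' : Fin (m+1), wv (Fin.castLE hLT i + t') a * xt t' := by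
        intro i
        rw [pad_sum hKle (fun t' => wv (Fin.castLE hLT i + t') a * xt t')
          (fun t' h' => by rw [hxt0 t' h', mul_zero])]
        refine Finset.sum_congr rfl fun j _ => ?_
        have hij : (i:ℕ) + (j:ℕ) < m+1 := by
          have h1 := i.isLt
          have h2 := j.isLt
          omega
        have hadd : (Fin.castLE hLT i + Fin.castLE hKle j : Fin (m+1)) = ⟨(i:ℕ)+(j:ℕ), hij⟩ := by
          apply Fin.ext
          rw [Fin.val_add]
          simp only [Fin.castLE]
          exact Nat.mod_eq_of_lt hij
        rw [hadd, hxtc j]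
        simp only [hankelMat, Matrix.of_apply]
        rw [dif_pos hij]
      have hsub : ∑ i : Fin L, (∑ t' : Fin (m+1), wv (Fin.castLE hLT i + t') a * xt t')^2
          ≤ ∑ t : Fin (m+1), (∑ t' : Fin (m+1), wv (t + t') a * xt t')^2 := by
        calc ∑ i : Fin L, (∑ t' : Fin (m+1), wv (Fin.castLE hLT i + t') a * xt t')^2
            = ∑ t ∈ Finset.univ.map (Fin.castLEEmb hLT),
                (∑ t' : Fin (m+1), wv (t + t') a * xt t')^2 := by
              rw [Finset.sum_map]
              rfl
          _ ≤ ∑ t : Fin (m+1), (∑ t' : Fin (m+1), wv (t + t') a * xt t')^2 :=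
              Finset.sum_le_sum_of_subset_of_nonneg (Finset.subset_univ _)
                (fun t _ _ => sq_nonneg _)
      calc ∑ i : Fin L, (∑ j, hankelMat L wv (i, a) j * x j)^2
          = ∑ i : Fin L, (∑ t' : Fin (m+1), wv (Fin.castLE hLT i + t') a * xt t')^2 :=
            Finset.sum_congr rfl fun i _ => by rw [hEq i]
        _ ≤ ∑ t : Fin (m+1), (∑ t' : Fin (m+1), wv (t + t') a * xt t')^2 := hsub
        _ ≤ s^2 * ∑ t' : Fin (m+1), (xt t')^2 := circ_bound (fun t => wv t a) (h a) xt
        _ = s^2 * ∑ j : Fin (m+1-L+1), (x j)^2 := by rw [hxx]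
    calc ∑ i : Fin L, ∑ a : Fin n, (∑ j, hankelMat L wv (i, a) j * x j)^2
        = ∑ a : Fin n, ∑ i : Fin L, (∑ j, hankelMat L wv (i, a) j * x j)^2 :=
          Finset.sum_comm
      _ ≤ ∑ _a : Fin n, s^2 * ∑ j : Fin (m+1-L+1), (x j)^2 :=
          Finset.sum_le_sum fun a _ => hper a
      _ = (n * s^2) * ∑ j : Fin (m+1-L+1), (x j)^2 := by
          rw [Finset.sum_const, Finset.card_univ, Fintype.card_fin]
          rw [nsmul_eq_mul]
          ring
  rw [hnorm1, hnormx]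
  have h1 : Real.sqrt (∑ p : Fin L × Fin n, (∑ j, hankelMat L wv p j * x j)^2)
      ≤ Real.sqrt ((n * s^2) * ∑ j : Fin (m+1-L+1), (x j)^2) := Real.sqrt_le_sqrt key
  refine h1.trans ?_
  rw [Real.sqrt_mul (by positivity : (0:ℝ) ≤ (n : ℝ) * s^2)]

lemma gauss_exp_key {v : ℝ≥0} (hv : v ≠ 0) (r x : ℝ) :
    Real.exp (r * x) * gaussianPDFReal 0 v x
      = Real.exp ((v:ℝ) * r^2 / 2) * gaussianPDFReal (r * v) v x := by
  have hvpos : (0:ℝ) < (v:ℝ) := by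
    have := v.coe_nonneg
    rcases this.lt_or_eq with h | h
    · exact h
    · exact absurd (by exact_mod_cast h.symm) hv
  rw [gaussianPDFReal, gaussianPDFReal]
  have hexp : r * x + (-(x - 0)^2) / (2*(v:ℝ))
      = (v:ℝ)*r^2/2 + (-(x - r*(v:ℝ))^2) / (2*(v:ℝ)) := by
    field_simp
    ring
  calc Real.exp (r*x) * ((Real.sqrt (2*Real.pi*(v:ℝ)))⁻¹ * Real.exp ((-(x - 0)^2)/(2*(v:ℝ))))
      = (Real.sqrt (2*Real.pi*(v:ℝ)))⁻¹ * Real.exp (r*x + (-(x - 0)^2)/(2*(v:ℝ))) := by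
        rw [Real.exp_add]; ring
    _ = (Real.sqrt (2*Real.pi*(v:ℝ)))⁻¹
        * Real.exp ((v:ℝ)*r^2/2 + (-(x - r*(v:ℝ))^2)/(2*(v:ℝ))) := by rw [hexp]
    _ = Real.exp ((v:ℝ)*r^2/2)
        * ((Real.sqrt (2*Real.pi*(v:ℝ)))⁻¹ * Real.exp ((-(x - r*(v:ℝ))^2)/(2*(v:ℝ)))) := by
        rw [Real.exp_add]; ring

lemma gauss_int' {v : ℝ≥0} (hv : v ≠ 0) (r : ℝ) :
    Integrable (fun x => Real.exp (r * x)) (gaussianReal 0 v)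
    ∧ ∫ x, Real.exp (r * x) ∂(gaussianReal 0 v) = Real.exp ((v:ℝ) * r^2 / 2) := by
  have hpdfm : Measurable fun x => (gaussianPDFReal 0 v x).toNNReal :=
    (measurable_gaussianPDFReal 0 v).real_toNNReal
  have hwd : gaussianReal 0 v
      = volume.withDensity (fun x => ((gaussianPDFReal 0 v x).toNNReal : ℝ≥0∞)) := by
    rw [gaussianReal_of_var_ne_zero 0 hv, gaussianPDF_def]
    rfl
  have hsmul : ∀ x : ℝ, (gaussianPDFReal 0 v x).toNNReal • Real.exp (r * x)
      = Real.exp ((v:ℝ) * r^2 / 2) * gaussianPDFReal (r * v) v x := by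
    intro x
    rw [NNReal.smul_def, smul_eq_mul, Real.coe_toNNReal _ (gaussianPDFReal_nonneg 0 v x),
      mul_comm, gauss_exp_key hv]
  constructor
  · rw [hwd, integrable_withDensity_iff_integrable_smul hpdfm]
    have : (fun x => (gaussianPDFReal 0 v x).toNNReal • Real.exp (r * x))
        = fun x => Real.exp ((v:ℝ) * r^2 / 2) * gaussianPDFReal (r * v) v x := funext hsmul
    rw [this]
    exact (integrable_gaussianPDFReal (r * v) v).const_mul _
  · rw [hwd, integral_withDensity_eq_integral_smul hpdfm]
    calc ∫ x, (gaussianPDFReal 0 v x).toNNReal • Real.exp (r * x)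
        = ∫ x, Real.exp ((v:ℝ) * r^2 / 2) * gaussianPDFReal (r * v) v x := by
          exact integral_congr_ae (Filter.Eventually.of_forall hsmul)
      _ = Real.exp ((v:ℝ) * r^2 / 2) * ∫ x, gaussianPDFReal (r * v) v x := by
          rw [integral_const_mul]
      _ = Real.exp ((v:ℝ) * r^2 / 2) := by
          rw [integral_gaussianPDFReal_eq_one (r * v) hv, mul_one]

lemma gauss_exp {Om : Type} [MeasurableSpace Om] {mu : Measure Om} {X : Om → ℝ}
    (hXm : Measurable X) {v : ℝ≥0} (hv : v ≠ 0)
    (hmap : Measure.map X mu = gaussianReal 0 v) (r : ℝ) :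
    Integrable (fun om => Real.exp (r * X om)) mu
    ∧ ∫ om, Real.exp (r * X om) ∂mu = Real.exp ((v:ℝ) * r^2 / 2) := by
  have hg : AEStronglyMeasurable (fun x => Real.exp (r * x)) (Measure.map X mu) :=
    (Real.continuous_exp.comp (continuous_const.mul continuous_id)).aestronglyMeasurable
  constructor
  · have := (gauss_int' hv r).1
    rw [← hmap] at this
    exact (integrable_map_measure hg hXm.aemeasurable).mp this
  · rw [← integral_map hXm.aemeasurable hg, hmap]
    exact (gauss_int' hv r).2

lemma gauss_tail {Om : Type} [MeasurableSpace Om] {mu : Measure Om} [IsProbabilityMeasure mu]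
    {ι : Type} [Fintype ι] {X : ι → Om → ℝ}
    (hm : ∀ i, Measurable (X i))
    (hind : iIndepFun X mu)
    {v : ℝ≥0} (hv : v ≠ 0)
    (hmap : ∀ i, Measure.map (X i) mu = gaussianReal 0 v)
    (d : ι → ℝ) {V u : ℝ} (hV : 0 < V) (hdV : ∑ i, d i ^ 2 ≤ V) (hu : 0 < u) :
    mu {om | u ≤ ∑ i, d i * X i om} ≤ ENNReal.ofReal (Real.exp (-u^2 / (2 * v * V))) := by
  have hvpos : (0:ℝ) < (v:ℝ) := by
    rcases v.coe_nonneg.lt_or_eq with h | h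
    · exact h
    · exact absurd (by exact_mod_cast h.symm) hv
  set t : ℝ := u / ((v:ℝ) * V) with htdef
  have ht : 0 ≤ t := le_of_lt (div_pos hu (by positivity))
  set Y : ι → Om → ℝ := fun i om => d i * X i om with hY
  have hYm : ∀ i, Measurable (Y i) := fun i => (hm i).const_mul (d i)
  have hYind : iIndepFun Y mu :=
    hind.comp (fun i y => d i * y) (fun i => measurable_id.const_mul (d i))
  have hYint : ∀ i, Integrable (fun om => Real.exp (t * Y i om)) mu := by
    intro i
    have := (gauss_exp (hm i) hv (hmap i) (t * d i)).1
    refine this.congr ?_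
    refine Filter.Eventually.of_forall fun om => ?_
    rw [hY]
    simp only
    rw [mul_assoc]
  have hmgf : ∀ i, mgf (Y i) mu t = Real.exp ((v:ℝ) * (t * d i)^2 / 2) := by
    intro i
    have h1 : mgf (Y i) mu t = ∫ om, Real.exp ((t * d i) * X i om) ∂mu := by
      rw [mgf]
      exact integral_congr_ae (Filter.Eventually.of_forall fun om => by
        rw [hY]; simp only; rw [mul_assoc])
    rw [h1, (gauss_exp (hm i) hv (hmap i) (t * d i)).2]
  have hset : {om | u ≤ ∑ i, d i * X i om} = {om | u ≤ (∑ i, Y i) om} := by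
    ext om
    simp [hY, Finset.sum_apply]
  have hch := measure_ge_le_exp_mul_mgf (μ := mu) (X := ∑ i, Y i) u ht
    (hYind.integrable_exp_mul_sum hYm (fun i _ => hYint i))
  have hmgfsum : mgf (∑ i, Y i) mu t = Real.exp (∑ i, (v:ℝ) * (t * d i)^2/2) := by
    rw [hYind.mgf_sum hYm Finset.univ, Real.exp_sum]
    exact Finset.prod_congr rfl fun i _ => hmgf i
  have harith : Real.exp (-t*u) * Real.exp (∑ i, (v:ℝ)*(t*d i)^2/2)
      ≤ Real.exp (-u^2/(2*(v:ℝ)*V)) := by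
    rw [← Real.exp_add, Real.exp_le_exp]
    have h2 : ∑ i, (v:ℝ)*(t*d i)^2/2 = ((v:ℝ)*t^2/2) * ∑ i, d i ^2 := by
      rw [Finset.mul_sum]
      exact Finset.sum_congr rfl fun i _ => by ring
    rw [h2]
    have h3 : ((v:ℝ)*t^2/2) * ∑ i, d i^2 ≤ ((v:ℝ)*t^2/2) * V :=
      mul_le_mul_of_nonneg_left hdV (by positivity)
    have h4 : -t*u + ((v:ℝ)*t^2/2)*V = -u^2/(2*(v:ℝ)*V) := by
      rw [htdef]
      field_simp
      ring
    linarith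
  have hfin : (mu {om | u ≤ (∑ i, Y i) om}).toReal ≤ Real.exp (-u^2/(2*(v:ℝ)*V)) := by
    calc (mu {om | u ≤ (∑ i, Y i) om}).toReal
        ≤ Real.exp (-t*u) * mgf (∑ i, Y i) mu t := hch
      _ = Real.exp (-t*u) * Real.exp (∑ i, (v:ℝ)*(t*d i)^2/2) := by rw [hmgfsum]
      _ ≤ _ := harith
  rw [hset]
  calc mu {om | u ≤ (∑ i, Y i) om}
      = ENNReal.ofReal ((mu {om | u ≤ (∑ i, Y i) om}).toReal) :=
        (ENNReal.ofReal_toReal (measure_ne_top mu _)).symm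
    _ ≤ ENNReal.ofReal (Real.exp (-u^2 / (2*(v:ℝ)*V))) := ENNReal.ofReal_le_ofReal hfin

lemma gauss_tail_abs {Om : Type} [MeasurableSpace Om] {mu : Measure Om} [IsProbabilityMeasure mu]
    {ι : Type} [Fintype ι] {X : ι → Om → ℝ}
    (hm : ∀ i, Measurable (X i))
    (hind : iIndepFun X mu)
    {v : ℝ≥0} (hv : v ≠ 0)
    (hmap : ∀ i, Measure.map (X i) mu = gaussianReal 0 v)
    (d : ι → ℝ) {V u : ℝ} (hV : 0 < V) (hdV : ∑ i, d i ^ 2 ≤ V) (hu : 0 < u) :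
    mu {om | u < |∑ i, d i * X i om|} ≤ ENNReal.ofReal (2 * Real.exp (-u^2 / (2 * v * V))) := by
  have hsub : {om | u < |∑ i, d i * X i om|}
      ⊆ {om | u ≤ ∑ i, d i * X i om} ∪ {om | u ≤ ∑ i, (-d) i * X i om} := by
    intro om hom
    simp only [Set.mem_setOf_eq, Set.mem_union]
    have hom' : u < |∑ i, d i * X i om| := hom
    rcases abs_cases (∑ i, d i * X i om) with ⟨he, _⟩ | ⟨he, _⟩
    · left
      rw [he] at hom'
      exact le_of_lt hom'
    · right
      rw [he] at hom'
      calc u ≤ -∑ i, d i * X i om := le_of_lt hom' 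
        _ = ∑ i, (-d) i * X i om := by
          rw [← Finset.sum_neg_distrib]
          exact Finset.sum_congr rfl fun i _ => by simp [neg_mul]
  have h1 := gauss_tail hm hind hv hmap d hV hdV hu
  have h2 := gauss_tail hm hind hv hmap (-d) hV (by simpa using hdV) hu
  calc mu {om | u < |∑ i, d i * X i om|}
      ≤ mu ({om | u ≤ ∑ i, d i * X i om} ∪ {om | u ≤ ∑ i, (-d) i * X i om}) :=
        measure_mono hsub
    _ ≤ mu {om | u ≤ ∑ i, d i * X i om} + mu {om | u ≤ ∑ i, (-d) i * X i om} :=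
        measure_union_le _ _
    _ ≤ ENNReal.ofReal (Real.exp (-u^2 / (2*(v:ℝ)*V)))
        + ENNReal.ofReal (Real.exp (-u^2 / (2*(v:ℝ)*V))) := add_le_add h1 h2
    _ = ENNReal.ofReal (2 * Real.exp (-u^2 / (2*(v:ℝ)*V))) := by
        rw [← ENNReal.ofReal_add (Real.exp_nonneg _) (Real.exp_nonneg _)]
        ring_nf

lemma iIndepFun_congr {Om : Type} [MeasurableSpace Om] {mu : Measure Om} {ι : Type}
    {X Y : ι → Om → ℝ} (h : ∀ i, X i =ᵐ[mu] Y i)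
    (hX : iIndepFun X mu) :
    iIndepFun Y mu := by
  rw [iIndepFun_iff_measure_inter_preimage_eq_mul] at hX ⊢
  intro S sets hsets
  have hae : ∀ i, (X i ⁻¹' sets i : Set Om) =ᵐ[mu] (Y i ⁻¹' sets i) := by
    intro i
    filter_upwards [h i] with om hom
    change (X i om ∈ sets i) = (Y i om ∈ sets i)
    rw [hom]
  have h1 : mu (⋂ i ∈ S, Y i ⁻¹' sets i) = mu (⋂ i ∈ S, X i ⁻¹' sets i) := by
    refine measure_congr ?_
    exact EventuallyEq.countable_bInter (S : Set ι).to_countable fun i _ => (hae i).symm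
  rw [h1, hX S hsets]
  exact Finset.prod_congr rfl fun i _ => measure_congr (hae i)


lemma normsq_all {T : ℕ} (hT : T ≠ 0) (c : Fin T → ℝ) {s : ℝ} (hs : 0 ≤ s)
    (hgood : ∀ k : ℕ, k ≤ T/2 →
      if T ∣ 2*k then
        |∑ t : Fin T, c t * Real.cos (2*Real.pi*((k*(t:ℕ) : ℕ):ℝ)/(T:ℝ))| ≤ s
      else
        |∑ t : Fin T, c t * Real.cos (2*Real.pi*((k*(t:ℕ) : ℕ):ℝ)/(T:ℝ))| ≤ Real.sqrt (s^2/2) ∧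
        |∑ t : Fin T, c t * Real.sin (2*Real.pi*((k*(t:ℕ) : ℕ):ℝ)/(T:ℝ))| ≤ Real.sqrt (s^2/2)) :
    ∀ j : Fin T, Complex.normSq (∑ t : Fin T, (c t : ℂ) * omg T ^ ((j:ℕ) * (t:ℕ))) ≤ s^2 := by
  have claim : ∀ k : ℕ, k ≤ T/2 →
      Complex.normSq (∑ t : Fin T, (c t : ℂ) * omg T ^ (k * (t:ℕ))) ≤ s^2 := by
    intro k hk
    have hsq : Complex.normSq (∑ t : Fin T, (c t : ℂ) * omg T ^ (k*(t:ℕ)))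
        = (∑ t : Fin T, c t * Real.cos (2*Real.pi*((k*(t:ℕ) : ℕ):ℝ)/(T:ℝ)))^2
          + (∑ t : Fin T, c t * Real.sin (2*Real.pi*((k*(t:ℕ) : ℕ):ℝ)/(T:ℝ)))^2 := by
      rw [Complex.normSq_apply, cfour_re, cfour_im]
      ring
    by_cases hd : T ∣ 2*k
    · have hg := hgood k hk
      rw [if_pos hd] at hg
      have hI : (∑ t : Fin T, c t * Real.sin (2*Real.pi*((k*(t:ℕ) : ℕ):ℝ)/(T:ℝ))) = 0 :=
        Finset.sum_eq_zero fun t _ => by rw [sin_heavy_zero hT hd hk t, mul_zero]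
      rw [hsq, hI]
      have h1 : (∑ t : Fin T, c t * Real.cos (2*Real.pi*((k*(t:ℕ) : ℕ):ℝ)/(T:ℝ)))^2 ≤ s^2 := by
        rw [← _root_.sq_abs]
        exact pow_le_pow_left₀ (abs_nonneg _) hg 2
      nlinarith
    · have hg := hgood k hk
      rw [if_neg hd] at hg
      obtain ⟨h1, h2⟩ := hg
      have hsp : (Real.sqrt (s^2/2))^2 = s^2/2 := Real.sq_sqrt (by positivity)
      have e1 : (∑ t : Fin T, c t * Real.cos (2*Real.pi*((k*(t:ℕ) : ℕ):ℝ)/(T:ℝ)))^2 ≤ s^2/2 := by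
        rw [← _root_.sq_abs, ← hsp]
        exact pow_le_pow_left₀ (abs_nonneg _) h1 2
      have e2 : (∑ t : Fin T, c t * Real.sin (2*Real.pi*((k*(t:ℕ) : ℕ):ℝ)/(T:ℝ)))^2 ≤ s^2/2 := by
        rw [← _root_.sq_abs, ← hsp]
        exact pow_le_pow_left₀ (abs_nonneg _) h2 2
      rw [hsq]
      linarith
  intro j
  by_cases hj : (j:ℕ) ≤ T/2
  · exact claim (j:ℕ) hj
  · have hjlt := j.isLt
    have hk1 : T - (j:ℕ) ≤ T/2 := by omega
    have hkT : T - (j:ℕ) ≤ T := Nat.sub_le _ _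
    have hjeq : (j:ℕ) = T - (T - (j:ℕ)) := by omega
    rw [hjeq, cfour_conj hT c hkT, Complex.normSq_conj]
    exact claim _ hk1

lemma coef_sum {T : ℕ} (hT : T ≠ 0) :
    ∑ k ∈ Finset.range (T/2+1), (if T ∣ 2*k then (2:ℝ) else 4) ≤ 2*T := by
  classical
  have hsplit : ∀ k : ℕ, (if T ∣ 2*k then (2:ℝ) else 4) = 4 - (if T ∣ 2*k then (2:ℝ) else 0) := by
    intro k
    by_cases h : T ∣ 2*k <;> simp [h] <;> norm_num
  rw [Finset.sum_congr rfl fun k _ => hsplit k, Finset.sum_sub_distrib, Finset.sum_const,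
    Finset.card_range, Finset.sum_ite, Finset.sum_const, Finset.sum_const_zero, add_zero,
    nsmul_eq_mul, nsmul_eq_mul]
  set F := Finset.filter (fun k => T ∣ 2*k) (Finset.range (T/2+1)) with hF
  by_cases he : 2 ∣ T
  · have hT2 : T/2 * 2 = T := Nat.div_mul_cancel he
    have hT2ne : T/2 ≠ 0 := by omega
    have hsub : ({0, T/2} : Finset ℕ) ⊆ F := by
      intro x hx
      rw [hF, Finset.mem_filter, Finset.mem_range]
      rcases Finset.mem_insert.1 hx with h0 | h0
      · subst h0
        exact ⟨by omega, Dvd.intro 0 rfl⟩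
      · rw [Finset.mem_singleton.1 h0]
        refine ⟨by omega, ?_⟩
        rw [show 2 * (T/2) = T by omega]
    have hcard2 : 2 ≤ F.card := by
      have : ({0, T/2} : Finset ℕ).card = 2 := by
        rw [Finset.card_insert_of_notMem (by simp [hT2ne.symm]), Finset.card_singleton]
      rw [← this]
      exact Finset.card_le_card hsub
    have hc : (2:ℝ) ≤ (F.card : ℝ) := by exact_mod_cast hcard2
    have hTd : ((T/2 : ℕ) : ℝ) * 2 = (T:ℝ) := by exact_mod_cast hT2
    push_cast
    linarith
  · have hT2 : T/2 * 2 + 1 = T := by omega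
    have hsub : ({0} : Finset ℕ) ⊆ F := by
      intro x hx
      rw [Finset.mem_singleton.1 hx, hF, Finset.mem_filter, Finset.mem_range]
      exact ⟨by omega, Dvd.intro 0 rfl⟩
    have hcard1 : 1 ≤ F.card := by
      have : ({0} : Finset ℕ).card = 1 := Finset.card_singleton 0
      rw [← this]
      exact Finset.card_le_card hsub
    have hc : (1:ℝ) ≤ (F.card : ℝ) := by exact_mod_cast hcard1
    have hTd : ((T/2 : ℕ) : ℝ) * 2 + 1 = (T:ℝ) := by exact_mod_cast hT2
    push_cast
    linarith

open MeasureTheory ProbabilityTheory in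
/-- High-probability bound on the averaged-noise Hankel matrix. -/
theorem stmt17 {Om : Type} [MeasurableSpace Om] (mu : Measure Om) [IsProbabilityMeasure mu]
    {n N L T : ℕ} (hn : 1 ≤ n) (hN : 1 ≤ N) (hL : 1 ≤ L) (hLT : L ≤ T)
    (sig : ℝ) (hsig : 0 < sig) (del : ℝ) (hdel0 : 0 < del) (hdel1 : del < 1)
    (w : Om → Fin T → Fin n → ℝ)
    (hiid : iIndepFun
      (fun p : Fin T × Fin n => fun om => w om p.1 p.2) mu)
    (hdist : ∀ p : Fin T × Fin n,
      Measure.map (fun om => w om p.1 p.2) mu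
        = gaussianReal 0 (Real.toNNReal (sig ^ 2 / N))) :
    ENNReal.ofReal (1 - del)
      ≤ mu {om | specNorm (hankelMat L (w om))
            ≤ Real.sqrt (2 * sig ^ 2 * n * T / N * Real.log (2 * n * T / del))} := by
  classical
  have hT0 : T ≠ 0 := by omega
  obtain ⟨m, rfl⟩ : ∃ m, T = m + 1 := ⟨T - 1, by omega⟩
  have hT0' : m + 1 ≠ 0 := Nat.succ_ne_zero m
  have hNpos : (0:ℝ) < (N:ℝ) := by exact_mod_cast hN
  have hn1 : (1:ℝ) ≤ (n:ℝ) := by exact_mod_cast hn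
  have hT1 : (1:ℝ) ≤ ((m+1 : ℕ):ℝ) := by exact_mod_cast Nat.one_le_iff_ne_zero.2 hT0'
  set vr : ℝ := sig^2 / (N:ℝ) with hvr
  have hvrpos : 0 < vr := by positivity
  set v : ℝ≥0 := Real.toNNReal (sig^2 / (N:ℝ)) with hv
  have hvco : (v:ℝ) = vr := Real.coe_toNNReal _ hvrpos.le
  have hv0 : v ≠ 0 := by
    intro h0
    have : (v:ℝ) = 0 := by rw [h0]; simp
    rw [hvco] at this
    exact hvrpos.ne' this
  set ell : ℝ := Real.log (2 * n * ((m+1:ℕ):ℝ) / del) with hell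
  have hratpos : (0:ℝ) < 2 * n * ((m+1:ℕ):ℝ) / del := by positivity
  have h2nT : (1:ℝ) < 2 * n * ((m+1:ℕ):ℝ) / del := by
    rw [lt_div_iff₀ hdel0]
    nlinarith
  have hellpos : 0 < ell := Real.log_pos h2nT
  set s : ℝ := Real.sqrt (2 * ((m+1:ℕ):ℝ) * vr * ell) with hs
  have hs0 : 0 ≤ s := Real.sqrt_nonneg _
  have hspos : 0 < s := Real.sqrt_pos.2 (by positivity)
  have hssq : s^2 = 2 * ((m+1:ℕ):ℝ) * vr * ell := Real.sq_sqrt (by positivity)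
  set s' : ℝ := Real.sqrt (s^2/2) with hs'
  have hs'pos : 0 < s' := Real.sqrt_pos.2 (by positivity)
  have hs'sq : s'^2 = s^2/2 := Real.sq_sqrt (by positivity)
  have hBeq : Real.sqrt ((n:ℝ) * s^2)
      = Real.sqrt (2 * sig^2 * n * ((m+1:ℕ):ℝ) / N * ell) := by
    congr 1
    rw [hssq, hvr]
    ring
  -- measurable modification
  set X : Fin (m+1) × Fin n → Om → ℝ := fun p om => w om p.1 p.2 with hX
  have hXae : ∀ p, AEMeasurable (X p) mu := by
    intro p
    by_contra hc
    have h0 := hdist p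
    rw [Measure.map_of_not_aemeasurable hc] at h0
    have h1 : (0 : Measure ℝ) Set.univ = (gaussianReal 0 (Real.toNNReal (sig ^ 2 / N))) Set.univ := by
      rw [h0]
    simp [measure_univ] at h1
  set Xm : Fin (m+1) × Fin n → Om → ℝ := fun p => (hXae p).mk (X p) with hXm
  have hXmm : ∀ p, Measurable (Xm p) := fun p => (hXae p).measurable_mk
  have hXeq : ∀ p, X p =ᵐ[mu] Xm p := fun p => (hXae p).ae_eq_mk
  have hind' : iIndepFun Xm mu := iIndepFun_congr hXeq hiid
  have hmap' : ∀ p, Measure.map (Xm p) mu = gaussianReal 0 v := by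
    intro p
    rw [← Measure.map_congr (hXeq p)]
    exact hdist p
  -- coefficient vectors
  set dcos : Fin n → ℕ → (Fin (m+1) × Fin n → ℝ) := fun a k p =>
    if p.2 = a then Real.cos (2*Real.pi*((k*((p.1:Fin (m+1)):ℕ) : ℕ):ℝ)/((m+1:ℕ):ℝ)) else 0
    with hdcos
  set dsin : Fin n → ℕ → (Fin (m+1) × Fin n → ℝ) := fun a k p =>
    if p.2 = a then Real.sin (2*Real.pi*((k*((p.1:Fin (m+1)):ℕ) : ℕ):ℝ)/((m+1:ℕ):ℝ)) else 0
    with hdsin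
  have hsum_cos : ∀ (a : Fin n) (k : ℕ) (om : Om),
      ∑ p : Fin (m+1) × Fin n, dcos a k p * Xm p om
        = ∑ t : Fin (m+1),
            Real.cos (2*Real.pi*((k*(t:ℕ) : ℕ):ℝ)/((m+1:ℕ):ℝ)) * Xm (t, a) om := by
    intro a k om
    rw [Fintype.sum_prod_type]
    refine Finset.sum_congr rfl fun t _ => ?_
    simp only [hdcos, ite_mul, zero_mul]
    rw [Finset.sum_ite_eq' Finset.univ a
      (fun b => Real.cos (2*Real.pi*((k*(t:ℕ) : ℕ):ℝ)/((m+1:ℕ):ℝ)) * Xm (t, b) om)]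
    simp
  have hsum_sin : ∀ (a : Fin n) (k : ℕ) (om : Om),
      ∑ p : Fin (m+1) × Fin n, dsin a k p * Xm p om
        = ∑ t : Fin (m+1),
            Real.sin (2*Real.pi*((k*(t:ℕ) : ℕ):ℝ)/((m+1:ℕ):ℝ)) * Xm (t, a) om := by
    intro a k om
    rw [Fintype.sum_prod_type]
    refine Finset.sum_congr rfl fun t _ => ?_
    simp only [hdsin, ite_mul, zero_mul]
    rw [Finset.sum_ite_eq' Finset.univ a
      (fun b => Real.sin (2*Real.pi*((k*(t:ℕ) : ℕ):ℝ)/((m+1:ℕ):ℝ)) * Xm (t, b) om)]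
    simp
  have hsq_cos : ∀ (a : Fin n) (k : ℕ),
      ∑ p : Fin (m+1) × Fin n, (dcos a k p)^2
        = ∑ t : Fin (m+1), Real.cos (2*Real.pi*((k*(t:ℕ) : ℕ):ℝ)/((m+1:ℕ):ℝ))^2 := by
    intro a k
    rw [Fintype.sum_prod_type]
    refine Finset.sum_congr rfl fun t _ => ?_
    simp only [hdcos, apply_ite (fun r : ℝ => r^2), show (0:ℝ)^2 = 0 from by norm_num]
    rw [Finset.sum_ite_eq' Finset.univ a
      (fun _ => Real.cos (2*Real.pi*((k*(t:ℕ) : ℕ):ℝ)/((m+1:ℕ):ℝ))^2)]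
    simp
  have hsq_sin : ∀ (a : Fin n) (k : ℕ),
      ∑ p : Fin (m+1) × Fin n, (dsin a k p)^2
        = ∑ t : Fin (m+1), Real.sin (2*Real.pi*((k*(t:ℕ) : ℕ):ℝ)/((m+1:ℕ):ℝ))^2 := by
    intro a k
    rw [Fintype.sum_prod_type]
    refine Finset.sum_congr rfl fun t _ => ?_
    simp only [hdsin, apply_ite (fun r : ℝ => r^2), show (0:ℝ)^2 = 0 from by norm_num]
    rw [Finset.sum_ite_eq' Finset.univ a
      (fun _ => Real.sin (2*Real.pi*((k*(t:ℕ) : ℕ):ℝ)/((m+1:ℕ):ℝ))^2)]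
    simp
  -- exponents
  have hTpos : (0:ℝ) < ((m+1:ℕ):ℝ) := by positivity
  have hexp_heavy : -s^2 / (2 * (v:ℝ) * ((m+1:ℕ):ℝ)) = -ell := by
    rw [hssq, hvco]
    field_simp
  have hexp_light : -s'^2 / (2 * (v:ℝ) * (((m+1:ℕ):ℝ)/2)) = -ell := by
    rw [hs'sq, hssq, hvco]
    field_simp
  have hexpval : Real.exp (-ell) = del / (2 * n * ((m+1:ℕ):ℝ)) := by
    rw [hell, Real.exp_neg, Real.exp_log hratpos, inv_div]
  -- bad events
  set E : Fin n × ℕ → Set Om := fun q =>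
    if (m+1) ∣ 2*q.2 then {om | s < |∑ p : Fin (m+1) × Fin n, dcos q.1 q.2 p * Xm p om|}
    else {om | s' < |∑ p : Fin (m+1) × Fin n, dcos q.1 q.2 p * Xm p om|}
      ∪ {om | s' < |∑ p : Fin (m+1) × Fin n, dsin q.1 q.2 p * Xm p om|} with hE
  set S : Finset (Fin n × ℕ) := Finset.univ ×ˢ Finset.range ((m+1)/2 + 1) with hS
  set BAD : Set Om := ⋃ q ∈ S, E q with hBAD
  have hEbound : ∀ q ∈ S, mu (E q)
      ≤ ENNReal.ofReal ((if (m+1) ∣ 2*q.2 then (2:ℝ) else 4) * Real.exp (-ell)) := by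
    rintro ⟨a, k⟩ _
    by_cases hd : (m+1) ∣ 2*k
    · rw [hE]
      simp only [if_pos hd]
      have hb := gauss_tail_abs hXmm hind' hv0 hmap' (dcos a k)
        (V := ((m+1:ℕ):ℝ)) hTpos (by rw [hsq_cos a k]; exact cos_sq_sum_le (m+1) k) hspos
      rw [hexp_heavy] at hb
      exact hb
    · rw [hE]
      simp only [if_neg hd]
      have hb1 := gauss_tail_abs hXmm hind' hv0 hmap' (dcos a k)
        (V := ((m+1:ℕ):ℝ)/2) (by positivity)
        (by rw [hsq_cos a k, cos_sq_sum_eq hT0' hd]) hs'pos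
      have hb2 := gauss_tail_abs hXmm hind' hv0 hmap' (dsin a k)
        (V := ((m+1:ℕ):ℝ)/2) (by positivity)
        (by rw [hsq_sin a k, sin_sq_sum_eq hT0' hd]) hs'pos
      rw [hexp_light] at hb1 hb2
      calc mu ({om | s' < |∑ p : Fin (m+1) × Fin n, dcos a k p * Xm p om|}
            ∪ {om | s' < |∑ p : Fin (m+1) × Fin n, dsin a k p * Xm p om|})
          ≤ mu {om | s' < |∑ p : Fin (m+1) × Fin n, dcos a k p * Xm p om|}
            + mu {om | s' < |∑ p : Fin (m+1) × Fin n, dsin a k p * Xm p om|} :=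
            measure_union_le _ _
        _ ≤ ENNReal.ofReal (2 * Real.exp (-ell)) + ENNReal.ofReal (2 * Real.exp (-ell)) :=
            add_le_add hb1 hb2
        _ = ENNReal.ofReal (4 * Real.exp (-ell)) := by
            rw [← ENNReal.ofReal_add (by positivity) (by positivity)]
            ring_nf
  have hsumreal : ∑ q ∈ S, (if (m+1) ∣ 2*q.2 then (2:ℝ) else 4) * Real.exp (-ell) ≤ del := by
    rw [hS, Finset.sum_product]
    have hinner : ∀ a : Fin n,
        ∑ k ∈ Finset.range ((m+1)/2 + 1), (if (m+1) ∣ 2*k then (2:ℝ) else 4) * Real.exp (-ell)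
          ≤ 2 * ((m+1:ℕ):ℝ) * Real.exp (-ell) := by
      intro a
      rw [← Finset.sum_mul]
      exact mul_le_mul_of_nonneg_right (coef_sum hT0') (Real.exp_nonneg _)
    calc ∑ a : Fin n, ∑ k ∈ Finset.range ((m+1)/2 + 1),
          (if (m+1) ∣ 2*k then (2:ℝ) else 4) * Real.exp (-ell)
        ≤ ∑ _a : Fin n, 2 * ((m+1:ℕ):ℝ) * Real.exp (-ell) :=
          Finset.sum_le_sum fun a _ => hinner a
      _ = n * (2 * ((m+1:ℕ):ℝ) * Real.exp (-ell)) := by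
          rw [Finset.sum_const, Finset.card_univ, Fintype.card_fin, nsmul_eq_mul]
      _ = del := by
          rw [hexpval]
          field_simp
  have hmuBAD : mu BAD ≤ ENNReal.ofReal del := by
    calc mu BAD ≤ ∑ q ∈ S, mu (E q) := measure_biUnion_finset_le S E
      _ ≤ ∑ q ∈ S, ENNReal.ofReal ((if (m+1) ∣ 2*q.2 then (2:ℝ) else 4) * Real.exp (-ell)) :=
          Finset.sum_le_sum hEbound
      _ = ENNReal.ofReal (∑ q ∈ S, (if (m+1) ∣ 2*q.2 then (2:ℝ) else 4) * Real.exp (-ell)) := by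
          rw [ENNReal.ofReal_sum_of_nonneg]
          intro q _
          positivity
      _ ≤ ENNReal.ofReal del := ENNReal.ofReal_le_ofReal hsumreal
  have hBADm : MeasurableSet BAD := by
    refine Finset.measurableSet_biUnion S fun q _ => ?_
    have hmc : Measurable fun om => ∑ p : Fin (m+1) × Fin n, dcos q.1 q.2 p * Xm p om :=
      Finset.measurable_sum Finset.univ fun p _ => ((hXmm p).const_mul (dcos q.1 q.2 p))
    have hms : Measurable fun om => ∑ p : Fin (m+1) × Fin n, dsin q.1 q.2 p * Xm p om :=
      Finset.measurable_sum Finset.univ fun p _ => ((hXmm p).const_mul (dsin q.1 q.2 p))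
    by_cases hd : (m+1) ∣ 2*q.2
    · simp only [hE, if_pos hd]
      exact measurableSet_lt measurable_const hmc.abs
    · simp only [hE, if_neg hd]
      exact (measurableSet_lt measurable_const hmc.abs).union
        (measurableSet_lt measurable_const hms.abs)
  set NN : Set Om := ⋃ p : Fin (m+1) × Fin n, {om | X p om ≠ Xm p om} with hNN
  have hNNnull : mu NN = 0 := by
    refine measure_iUnion_null fun p => ?_
    have h := hXeq p
    exact ae_iff.1 h
  -- inclusion of the good event in the target set
  have hincl : BADᶜ ∩ NNᶜ ⊆ {om | specNorm (hankelMat L (w om))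
      ≤ Real.sqrt (2 * sig^2 * n * ((m+1:ℕ):ℝ) / N * ell)} := by
    rintro om ⟨homB, homN⟩
    have hXom : ∀ p, Xm p om = w om p.1 p.2 := by
      intro p
      by_contra hne
      exact homN (Set.mem_iUnion.2 ⟨p, fun heq => hne heq.symm⟩)
    have hgood : ∀ a : Fin n, ∀ k : ℕ, k ≤ (m+1)/2 →
        if (m+1) ∣ 2*k then
          |∑ t : Fin (m+1), (fun t => w om t a) t
            * Real.cos (2*Real.pi*((k*(t:ℕ) : ℕ):ℝ)/((m+1:ℕ):ℝ))| ≤ s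
        else
          |∑ t : Fin (m+1), (fun t => w om t a) t
            * Real.cos (2*Real.pi*((k*(t:ℕ) : ℕ):ℝ)/((m+1:ℕ):ℝ))| ≤ Real.sqrt (s^2/2) ∧
          |∑ t : Fin (m+1), (fun t => w om t a) t
            * Real.sin (2*Real.pi*((k*(t:ℕ) : ℕ):ℝ)/((m+1:ℕ):ℝ))| ≤ Real.sqrt (s^2/2) := by
      intro a k hk
      have hqS : (a, k) ∈ S := by
        rw [hS, Finset.mem_product]
        exact ⟨Finset.mem_univ a, Finset.mem_range.2 (by omega)⟩
      have homE : om ∉ E (a, k) := fun hin => homB (Set.mem_biUnion hqS hin)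
      have hcosval : ∑ p : Fin (m+1) × Fin n, dcos a k p * Xm p om
          = ∑ t : Fin (m+1), (fun t => w om t a) t
            * Real.cos (2*Real.pi*((k*(t:ℕ) : ℕ):ℝ)/((m+1:ℕ):ℝ)) := by
        rw [hsum_cos a k om]
        refine Finset.sum_congr rfl fun t _ => ?_
        rw [hXom (t, a)]
        ring
      have hsinval : ∑ p : Fin (m+1) × Fin n, dsin a k p * Xm p om
          = ∑ t : Fin (m+1), (fun t => w om t a) t
            * Real.sin (2*Real.pi*((k*(t:ℕ) : ℕ):ℝ)/((m+1:ℕ):ℝ)) := by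
        rw [hsum_sin a k om]
        refine Finset.sum_congr rfl fun t _ => ?_
        rw [hXom (t, a)]
        ring
      by_cases hd : (m+1) ∣ 2*k
      · rw [if_pos hd]
        rw [hE] at homE
        simp only [if_pos hd] at homE
        rw [← hcosval]
        exact not_lt.1 fun hlt => homE hlt
      · rw [if_neg hd]
        rw [hE] at homE
        simp only [if_neg hd] at homE
        rw [← hs', ← hcosval, ← hsinval]
        constructor
        · exact not_lt.1 fun hlt => homE (Set.mem_union_left _ hlt)
        · exact not_lt.1 fun hlt => homE (Set.mem_union_right _ hlt)
    have hnormsq : ∀ a : Fin n, ∀ j : Fin (m+1),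
        Complex.normSq (∑ t : Fin (m+1), ((w om t a : ℝ) : ℂ) * omg (m+1) ^ ((j:ℕ) * (t:ℕ)))
          ≤ s^2 := by
      intro a
      have := normsq_all hT0' (fun t => w om t a) hs0 (by
        intro k hk
        have h := hgood a k hk
        simpa using h)
      simpa using this
    have hsb := spec_bound hL hLT (w om) hs0 (fun a j => by
      have := hnormsq a j
      simpa using this)
    rw [hBeq] at hsb
    exact hsb
  -- final chain
  have hgoal : ENNReal.ofReal (1 - del) ≤ mu {om | specNorm (hankelMat L (w om))
      ≤ Real.sqrt (2 * sig^2 * n * ((m+1:ℕ):ℝ) / N * ell)} := by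
    calc ENNReal.ofReal (1 - del) = 1 - ENNReal.ofReal del := by
          rw [ENNReal.ofReal_sub 1 hdel0.le, ENNReal.ofReal_one]
      _ ≤ 1 - mu BAD := tsub_le_tsub_left hmuBAD 1
      _ = mu BADᶜ := (prob_compl_eq_one_sub hBADm).symm
      _ ≤ mu ((BADᶜ ∩ NNᶜ) ∪ NN) := by
          refine measure_mono fun om hom => ?_
          by_cases hNin : om ∈ NN
          · exact Set.mem_union_right _ hNin
          · exact Set.mem_union_left _ ⟨hom, hNin⟩
      _ ≤ mu (BADᶜ ∩ NNᶜ) + mu NN := measure_union_le _ _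
      _ = mu (BADᶜ ∩ NNᶜ) := by rw [hNNnull, add_zero]
      _ ≤ _ := measure_mono hincl
  have hfinal : {om | specNorm (hankelMat L (w om))
      ≤ Real.sqrt (2 * sig^2 * n * ((m+1:ℕ):ℝ) / N * ell)}
      = {om | specNorm (hankelMat L (w om))
      ≤ Real.sqrt (2 * sig ^ 2 * ↑n * ↑(m+1) / ↑N * Real.log (2 * ↑n * ↑(m+1) / del))} := by
    rfl
  rw [← hfinal]
  exact hgoal

end
end
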